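/- arXiv:0912.0184 — 5 statements merged into one kernel-verified Lean document; each statement's English description precedes it below -/
import Mathlib

section
/- The number of permutations \(\sigma \in \mathfrak{S}_n\) whose first local minimum occurs at an even position (equivalently, desarrangements: permutations with \(\sigma(1) > \sigma(2) > \cdots > \sigma(2k) < \sigma(2k+1)\) for some \(k \ge 1\), where the initial decreasing run has even length) equals the derangement number \(d_n\), for all \(n \ge 1\). -/
def wordVal {n : ℕ} (σ : Equiv.Perm (Fin n)) (i : ℕ) : ℕ :=
  if h : i - 1 < n ∧ 1 ≤ i then ((σ ⟨i - 1, h.1⟩ : ℕ) + 1) else n + 1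

def IsDesarrangement {n : ℕ} (σ : Equiv.Perm (Fin n)) : Prop :=
  Even (sInf {i : ℕ | 1 ≤ i ∧ wordVal σ i < wordVal σ (i + 1)})

/-!
Let `a(σ)` be the position of the first ascent of `σ`. For `k ≤ n`, `k ≤ a(σ)` says that `σ`
decreases on its first `k` positions; such a `σ` is determined by its values on the last `n - k`
positions, which form an arbitrary injection, so there are `n! / k!` of them. Since
`∑_{i ≤ m} (-1)^i` is `1` for even `m` and `0` for odd `m`, the number of `σ` with `a(σ)` even is
`∑_{k ≤ n} (-1)^k n! / k!`, which is `d_n`.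
-/

open Equiv Finset

section StrictAntiOn

variable {α : Type*} [Fintype α] [LinearOrder α] {s : Set α}

theorem Equiv.Perm.eq_of_strictAntiOn_of_eqOn_compl {σ τ : Perm α} (hσ : StrictAntiOn σ s)
    (hτ : StrictAntiOn τ s) (h : Set.EqOn σ τ sᶜ) : σ = τ := by
  have image_eq (π : Perm α) : π '' s = (π '' sᶜ)ᶜ := by rw [π.image_compl, compl_compl]
  have hs : (fun a : s => σ a) = fun a : s => τ a := by
    rw [← (Set.strictAntiOn_iff_strictAnti.mp hσ).range_inj
      (Set.strictAntiOn_iff_strictAnti.mp hτ), ← Set.image_eq_range, ← Set.image_eq_range,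
      image_eq, image_eq, h.image_eq]
  ext a
  by_cases ha : a ∈ s
  · exact congrFun hs ⟨a, ha⟩
  · exact h ha

theorem Equiv.Perm.exists_strictAntiOn_extend (f : ↥sᶜ ↪ α) :
    ∃ σ : Perm α, StrictAntiOn σ s ∧ ∀ a : ↥sᶜ, σ a = f a := by
  classical
  have hcard : Fintype.card s = Fintype.card ↥(Set.range f)ᶜ := by
    rw [Fintype.card_compl_set, Set.card_range_of_injective f.injective, Fintype.card_compl_set]
    have := set_fintype_card_le_univ s
    omega
  let e : s ≃o (↥(Set.range f)ᶜ)ᵒᵈ := (Fintype.orderIsoFinOfCardEq s hcard).symm.trans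
    (Fin.revOrderIso.symm.trans (Fintype.orderIsoFinOfCardEq _ rfl).dual)
  let e' (a : s) : α := (OrderDual.ofDual (e a) : ↥(Set.range f)ᶜ)
  let g (a : α) : α := if h : a ∈ s then e' ⟨a, h⟩ else f ⟨a, h⟩
  have hg : g.Injective := by
    intro a b hab
    by_cases ha : a ∈ s <;> by_cases hb : b ∈ s <;> simp only [g, ha, hb, dif_pos] at hab
    · simpa using e.injective (Subtype.ext hab)
    · exact absurd ⟨_, hab.symm⟩ (OrderDual.ofDual (e ⟨a, ha⟩)).2
    · exact absurd ⟨_, hab⟩ (OrderDual.ofDual (e ⟨b, hb⟩)).2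
    · simpa using f.injective hab
  refine ⟨Equiv.ofBijective g (Finite.injective_iff_bijective.mp hg), fun a ha b hb hab => ?_,
    fun a => dif_neg a.2⟩
  simp only [Equiv.ofBijective_apply, g, dif_pos ha, dif_pos hb]
  exact e.strictMono (show (⟨a, ha⟩ : s) < ⟨b, hb⟩ from hab)

theorem Equiv.Perm.card_strictAntiOn (s : Set α) :
    Nat.card {σ : Perm α // StrictAntiOn σ s} = (Fintype.card α).descFactorial (Nat.card ↥sᶜ) := by
  classical
  let restrict (σ : {σ : Perm α // StrictAntiOn σ s}) : ↥sᶜ ↪ α :=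
    (Function.Embedding.subtype _).trans σ.1.toEmbedding
  have hbij : restrict.Bijective := by
    refine ⟨fun σ τ h => Subtype.ext ?_, fun f => ?_⟩
    · exact eq_of_strictAntiOn_of_eqOn_compl σ.2 τ.2 fun a ha => DFunLike.congr_fun h ⟨a, ha⟩
    · obtain ⟨σ, hσ, hf⟩ := exists_strictAntiOn_extend f
      exact ⟨⟨σ, hσ⟩, DFunLike.ext _ _ hf⟩
  rw [Nat.card_eq_of_bijective restrict hbij, Nat.card_eq_fintype_card, Fintype.card_embedding_eq,
    Nat.card_eq_fintype_card]

end StrictAntiOn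

theorem Finset.card_filter_even_eq_sum {ι : Type*} (s : Finset ι) (f : ι → ℕ) {N : ℕ}
    (hf : ∀ x ∈ s, f x ≤ N) :
    (#{x ∈ s | Even (f x)} : ℤ) =
      ∑ i ∈ range (N + 1), (-1 : ℤ) ^ i * (#{x ∈ s | i ≤ f x} : ℤ) := by
  have inner (x) (hx : x ∈ s) :
      ∑ i ∈ range (N + 1), (if i ≤ f x then (-1 : ℤ) ^ i else 0) = if Even (f x) then 1 else 0 := by
    rw [← sum_filter, show {i ∈ range (N + 1) | i ≤ f x} = range (f x + 1) by
      ext i; simp only [mem_filter, mem_range]; have := hf x hx; omega, neg_one_geom_sum]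
    simp only [Nat.even_add_one, ite_not]
  calc (#{x ∈ s | Even (f x)} : ℤ)
      = ∑ x ∈ s, ∑ i ∈ range (N + 1), if i ≤ f x then (-1 : ℤ) ^ i else 0 := by
        rw [natCast_card_filter, sum_congr rfl inner]
    _ = ∑ i ∈ range (N + 1), (-1 : ℤ) ^ i * (#{x ∈ s | i ≤ f x} : ℤ) := by
        simp only [sum_comm (s := s), natCast_card_filter, mul_sum, mul_ite, mul_one, mul_zero]

section Ascents

variable {n : ℕ}

theorem wordVal_succ (σ : Perm (Fin n)) (j : Fin n) : wordVal σ (j + 1) = σ j + 1 := by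
  simp [wordVal]

theorem wordVal_of_lt (σ : Perm (Fin n)) {i : ℕ} (h : n < i) : wordVal σ i = n + 1 := by
  rw [wordVal, dif_neg (by omega)]

def ascents (σ : Perm (Fin n)) : Set ℕ := {i | 1 ≤ i ∧ wordVal σ i < wordVal σ (i + 1)}

theorem succ_mem_ascents_iff (σ : Perm (Fin n)) {j : ℕ} (hj : j + 1 < n) :
    j + 1 ∈ ascents σ ↔ σ ⟨j, by omega⟩ < σ ⟨j + 1, hj⟩ := by
  have h₁ := wordVal_succ σ ⟨j, by omega⟩
  have h₂ := wordVal_succ σ ⟨j + 1, hj⟩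
  simp only at h₁ h₂
  simp only [ascents, Set.mem_ofPred_eq, h₁, h₂, Fin.lt_def]
  omega

theorem notMem_ascents_of_lt (σ : Perm (Fin n)) {i : ℕ} (h : n < i) : i ∉ ascents σ := by
  simp [ascents, wordVal_of_lt σ h, wordVal_of_lt σ (Nat.lt_succ_of_lt h)]

theorem self_mem_ascents (σ : Perm (Fin n)) (hn : 0 < n) : n ∈ ascents σ := by
  obtain ⟨m, rfl⟩ : ∃ m, n = m + 1 := ⟨n - 1, by omega⟩
  have := wordVal_succ σ (Fin.last m)
  have := (σ (Fin.last m)).isLt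
  simp_all [ascents, wordVal_of_lt σ (Nat.lt_succ_self _)]

noncomputable def firstAscent (σ : Perm (Fin n)) : ℕ := sInf (ascents σ)

theorem firstAscent_le (σ : Perm (Fin n)) : firstAscent σ ≤ n := by
  by_contra! h
  exact notMem_ascents_of_lt σ h
    (Nat.sInf_mem (Nat.nonempty_of_pos_sInf (show 0 < firstAscent σ by omega)))

theorem le_firstAscent_iff (σ : Perm (Fin n)) {i : ℕ} (hi : i ≤ n) :
    i ≤ firstAscent σ ↔ StrictAntiOn σ {k | (k : ℕ) < i} := by
  constructor
  · intro h
    have hanti : StrictAntiOn (fun j => wordVal σ (j + 1)) (Set.Iic (i - 1)) := by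
      refine strictAntiOn_Iic_of_succ_lt fun j hj => ?_
      have hasc : j + 1 ∉ ascents σ := Nat.notMem_of_lt_sInf (show j + 1 < firstAscent σ by omega)
      rw [succ_mem_ascents_iff σ (by omega), not_lt] at hasc
      have hne : σ ⟨j + 1, by omega⟩ ≠ σ ⟨j, by omega⟩ := by simp
      have h₁ := wordVal_succ σ ⟨j, by omega⟩
      have h₂ := wordVal_succ σ ⟨j + 1, by omega⟩
      simp only [Order.succ_eq_add_one, h₁, h₂, add_lt_add_iff_right, Fin.val_fin_lt]
      exact lt_of_le_of_ne hasc hne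
    intro a ha b hb hab
    have := hanti (show (a : ℕ) ≤ i - 1 by grind) (show (b : ℕ) ≤ i - 1 by grind) hab
    simpa only [wordVal_succ, add_lt_add_iff_right, Fin.val_fin_lt] using this
  · intro hanti
    by_contra! h
    have hmem : firstAscent σ ∈ ascents σ := Nat.sInf_mem ⟨n, self_mem_ascents σ (by omega)⟩
    obtain ⟨j, hj⟩ : ∃ j, firstAscent σ = j + 1 := ⟨firstAscent σ - 1, by grind [ascents]⟩
    rw [hj, succ_mem_ascents_iff σ (by omega)] at hmem
    exact (hanti (by grind) (by grind) (show (⟨j, _⟩ : Fin n) < ⟨j + 1, _⟩ by simp)).asymm hmem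

theorem card_le_firstAscent {k : ℕ} (hk : k ≤ n) :
    #{σ : Perm (Fin n) | k ≤ firstAscent σ} = (k + 1).ascFactorial (n - k) := by
  classical
  have hcompl : Nat.card ↥({j : Fin n | (j : ℕ) < k}ᶜ) = n - k := by
    rw [Nat.card_eq_fintype_card, Fintype.card_compl_set, Fintype.card_fin, Fintype.card_ofFinset]
    simp only [Set.mem_ofPred_eq, Fin.card_filter_val_lt, min_eq_right hk]
  calc #{σ : Perm (Fin n) | k ≤ firstAscent σ}
      = Nat.card {σ : Perm (Fin n) // StrictAntiOn σ {j | (j : ℕ) < k}} := by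
        rw [Nat.card_eq_fintype_card, Fintype.card_subtype]
        simp only [le_firstAscent_iff _ hk]
    _ = (k + 1).ascFactorial (n - k) := by
        rw [Perm.card_strictAntiOn, Fintype.card_fin, hcompl,
          ← Nat.add_descFactorial_eq_ascFactorial, Nat.add_sub_cancel' hk]

end Ascents

theorem stmt_6_general (n : ℕ) :
    Nat.card {σ : Equiv.Perm (Fin n) // IsDesarrangement σ} =
      Nat.card {σ : Equiv.Perm (Fin n) // ∀ i, σ i ≠ i} := by
  classical
  have hder : Nat.card {σ : Perm (Fin n) // ∀ i, σ i ≠ i} = numDerangements n :=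
    (Nat.card_eq_fintype_card (α := derangements (Fin n))).trans
      card_derangements_fin_eq_numDerangements
  have hdes : Nat.card {σ : Perm (Fin n) // IsDesarrangement σ} =
      #{σ : Perm (Fin n) | Even (firstAscent σ)} := by
    change Nat.card {σ : Perm (Fin n) // Even (firstAscent σ)} = _
    rw [Nat.card_eq_fintype_card, Fintype.card_subtype]
  rw [hdes, hder, ← Nat.cast_inj (R := ℤ), numDerangements_sum,
    card_filter_even_eq_sum _ _ fun σ _ => firstAscent_le σ]
  refine sum_congr rfl fun k hk => ?_
  rw [card_le_firstAscent (Nat.lt_succ_iff.mp (mem_range.mp hk))]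

/-- The number of desarrangements of `{1,…,n}` equals the number of derangements, for all
`n ≥ 1`. -/
theorem stmt_6 (n : ℕ) (hn : 1 ≤ n) :
    Nat.card {σ : Equiv.Perm (Fin n) // IsDesarrangement σ} =
      Nat.card {σ : Equiv.Perm (Fin n) // ∀ i, σ i ≠ i} :=
  stmt_6_general n
end

section
/- In the group algebra \(\mathbb{Q}\mathfrak{S}_n\), let \(\tau_n = \sum_{k=1}^{n} c_k\) where \(c_k\) is the cycle \((k, k-1, \dots, 2, 1)\) written as the permutation \(k\,1\,2\cdots(k-1)(k+1)\cdots n\) (moving \(k\) to the front). Then the minimal polynomial of right multiplication by \(\tau_n\) on \(\mathbb{Q}\mathfrak{S}_n\) is \(P_n(x) = (x-n)\prod_{k=0}^{n-2}(x-k)\); in particular this operator is diagonalizable with eigenvalues \(\{0,1,\dots,n-2,n\}\). -/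
/-!
Write `A_i` (`sortedFromSum n i`) for the sum of the permutations whose one-line word is increasing
from position `i` on, so that `A_0 = 1` and `A_{n-1} = A_n` is the sum of all permutations. Right
multiplication by `(cycleRange k)⁻¹` moves the first letter of a word to position `k`. A move to a
position `k < i` does not affect being increasing from `i` on, and from a word increasing from
position `i + 1` on exactly one move to a position `k ≥ i` yields a word increasing from `i` on.
Hence `A_i τ = i A_i + A_{i+1}` for `i < n`, so `A_i = τ (τ - 1) ⋯ (τ - i + 1)` and
`A_{n-1} (τ - n) = 0`. Conversely `cycleRange d` occurs in `A_i` exactly when `d ≤ i`, so for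
`deg p = d < n` its coefficient in `p(τ)` is the leading coefficient of `p`: no nonzero polynomial
of degree `< n` annihilates `τ`.
-/

open Equiv

/-- The Tsetlin library element `τ_n = ∑_{k=1}^n σ_k ∈ ℚ𝔖_n`, where `σ_k` has one-line
notation `k 1 2 ⋯ k̂ ⋯ n` (0-indexed: `σ_k = (Fin.cycleRange (k-1))⁻¹`, the cycle sending
position `0` to value `k-1` and shifting the first `k-1` values down). -/
noncomputable def tsetlin (n : ℕ) : MonoidAlgebra ℚ (Perm (Fin n)) :=
  ∑ k : Fin n, MonoidAlgebra.of ℚ (Perm (Fin n)) (Fin.cycleRange k)⁻¹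

namespace Fin

variable {n : ℕ}

lemma coe_cycleRange_apply (k j : Fin n) :
    (cycleRange k j : ℕ) = if j < k then (j : ℕ) + 1 else if j = k then 0 else j := by
  rcases lt_trichotomy j k with h | rfl | h
  · simp [h, coe_cycleRange_of_lt h]
  · simp [coe_cycleRange_of_le le_rfl]
  · simp [h.not_gt, h.ne', cycleRange_of_gt h]

lemma coe_cycleRange_le_succ (k j : Fin n) : (cycleRange k j : ℕ) ≤ j + 1 := by
  rw [coe_cycleRange_apply]
  split_ifs <;> omega

lemma strictMonoOn_cycleRange (k : Fin n) : StrictMonoOn (cycleRange k) {k}ᶜ := by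
  intro a ha b hb hab
  simp only [Set.mem_compl_iff, Set.mem_singleton_iff, Fin.ext_iff] at ha hb
  rw [Fin.lt_def] at hab ⊢
  rw [coe_cycleRange_apply, coe_cycleRange_apply]
  simp only [Fin.lt_def, Fin.ext_iff]
  split_ifs <;> omega

lemma strictMonoOn_cycleRange_symm [NeZero n] (k : Fin n) :
    StrictMonoOn (cycleRange k).symm {0}ᶜ := by
  have hne : ∀ c ∈ ({0}ᶜ : Set (Fin n)), (cycleRange k).symm c ∈ ({k}ᶜ : Set (Fin n)) := by
    intro c hc hck
    exact hc (by rw [← (cycleRange k).apply_symm_apply c, Set.mem_singleton_iff.1 hck,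
      cycleRange_self, Set.mem_singleton_iff])
  intro a ha b hb hab
  rwa [← (strictMonoOn_cycleRange k).lt_iff_lt (hne a ha) (hne b hb), apply_symm_apply,
    apply_symm_apply]

end Fin

lemma Polynomial.descPochhammer_eq_prod_range (R : Type*) [CommRing R] (n : ℕ) :
    descPochhammer R n = ∏ k ∈ Finset.range n, (X - C (k : R)) := by
  induction n with
  | zero => simp
  | succ n ih => rw [descPochhammer_succ_right, ih, Finset.prod_range_succ, ← map_natCast C]

lemma LinearMap.aeval_mulRight_apply {R A : Type*} [CommSemiring R] [Semiring A] [Algebra R A]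
    (a x : A) (p : Polynomial R) :
    Polynomial.aeval (LinearMap.mulRight R a) p x = x * Polynomial.aeval a p := by
  induction p using Polynomial.induction_on' with
  | add p q hp hq => simp [hp, hq, mul_add]
  | monomial k c => simp [Polynomial.aeval_monomial, LinearMap.pow_mulRight, ← Algebra.smul_def]

namespace Tsetlin

open Finset Polynomial Fin

variable {n : ℕ}

def IsSortedFrom (i : ℕ) (w : Perm (Fin n)) : Prop :=
  StrictMonoOn w {j | i ≤ (j : ℕ)}

instance (i : ℕ) : DecidablePred (IsSortedFrom (n := n) i) := fun w => by
  unfold IsSortedFrom StrictMonoOn; infer_instance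

lemma isSortedFrom_of_le {i : ℕ} (h : n ≤ i + 1) (w : Perm (Fin n)) : IsSortedFrom i w := by
  intro a ha b hb hab
  simp only [Set.mem_ofPred_eq] at ha hb
  rw [Fin.lt_def] at hab
  omega

lemma isSortedFrom_zero_iff {w : Perm (Fin n)} : IsSortedFrom 0 w ↔ w = 1 := by
  refine ⟨fun h => ?_, fun h => h ▸ fun _ _ _ _ hab => hab⟩
  have hw : StrictMono w := fun a b hab => h (Nat.zero_le _) (Nat.zero_le _) hab
  exact Equiv.ext (congrFun hw.eq_id)

lemma isSortedFrom_cycleRange_iff {i : ℕ} (d : Fin n) :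
    IsSortedFrom i (cycleRange d) ↔ (d : ℕ) ≤ i := by
  refine ⟨fun h => ?_, fun h a ha b hb hab => ?_⟩
  · by_contra! hid
    have hlt := h (a := ⟨d - 1, by omega⟩) (b := d) (show i ≤ d - 1 by omega) hid.le
      (Fin.lt_def.2 (show d - 1 < (d : ℕ) by omega))
    rw [Fin.lt_def, coe_cycleRange_apply, coe_cycleRange_apply] at hlt
    simp only [Fin.lt_def, Fin.ext_iff] at hlt
    split_ifs at hlt <;> omega
  · simp only [Set.mem_ofPred_eq] at ha hb
    rw [Fin.lt_def] at hab ⊢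
    rw [coe_cycleRange_apply, coe_cycleRange_apply]
    simp only [Fin.lt_def, Fin.ext_iff]
    split_ifs <;> omega

variable {i : ℕ} {u : Perm (Fin n)} {k : Fin n}

lemma isSortedFrom_mul_cycleRange_iff_of_lt (hk : (k : ℕ) < i) :
    IsSortedFrom i (u * cycleRange k) ↔ IsSortedFrom i u :=
  Set.EqOn.congr_strictMonoOn fun j hj => by
    rw [Perm.mul_apply, cycleRange_of_gt (Fin.lt_def.2 (lt_of_lt_of_le hk hj))]

lemma IsSortedFrom.of_mul_cycleRange [NeZero n] (h : IsSortedFrom i (u * cycleRange k)) :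
    IsSortedFrom (i + 1) u := by
  have hu : (u : Fin n → Fin n) = (u * cycleRange k) ∘ (cycleRange k).symm := by
    ext j; simp
  rw [IsSortedFrom, hu]
  refine h.comp ((strictMonoOn_cycleRange_symm k).mono fun j hj h0 => ?_) fun j hj => ?_
  · simp [Set.mem_singleton_iff.1 h0] at hj
  · have := coe_cycleRange_le_succ k ((cycleRange k).symm j)
    simp only [apply_symm_apply, Set.mem_ofPred_eq] at this hj ⊢
    omega

lemma isSortedFrom_mul_cycleRange_iff [NeZero n] (hk : i ≤ (k : ℕ))
    (hu : IsSortedFrom (i + 1) u) :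
    IsSortedFrom i (u * cycleRange k) ↔
      (∀ j : Fin n, i ≤ (j : ℕ) → j < k → u (cycleRange k j) < u 0) ∧
        ∀ j, k < j → u 0 < u j := by
  have hset : {j : Fin n | i ≤ (j : ℕ)} = insert k ({j : Fin n | i ≤ (j : ℕ)} \ {k}) := by
    rw [Set.insert_sdiff_singleton, Set.insert_eq_of_mem (by exact hk)]
  have hrest : StrictMonoOn (u * cycleRange k) ({j : Fin n | i ≤ (j : ℕ)} \ {k}) := by
    refine hu.comp ((strictMonoOn_cycleRange k).mono fun _ hj => hj.2) fun j hj => ?_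
    obtain ⟨hij, hjk⟩ := hj
    simp only [Set.mem_ofPred_eq, Set.mem_singleton_iff, Fin.ext_iff] at hij hjk ⊢
    rw [coe_cycleRange_apply]
    simp only [Fin.lt_def, Fin.ext_iff]
    split_ifs <;> omega
  rw [IsSortedFrom, hset, strictMonoOn_insert_iff]
  simp only [hrest, and_true, Set.mem_sdiff, Set.mem_ofPred_eq, Set.mem_singleton_iff,
    Perm.mul_apply, cycleRange_self]
  refine and_congr ⟨fun h j hj hjk => h j ⟨hj, hjk.ne⟩ hjk, fun h j hj hjk => h j hj.1 hjk⟩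
    ⟨fun h j hjk => ?_, fun h j _ hjk => ?_⟩
  · simpa [cycleRange_of_gt hjk] using h j ⟨by rw [Fin.lt_def] at hjk; omega, hjk.ne'⟩ hjk
  · simpa [cycleRange_of_gt hjk] using h j hjk

lemma eq_of_isSortedFrom_mul_cycleRange [NeZero n] {k' : Fin n} (hk : i ≤ (k : ℕ))
    (hk' : i ≤ (k' : ℕ)) (hu : IsSortedFrom (i + 1) u) (h : IsSortedFrom i (u * cycleRange k))
    (h' : IsSortedFrom i (u * cycleRange k')) : k = k' := by
  rw [isSortedFrom_mul_cycleRange_iff hk hu] at h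
  rw [isSortedFrom_mul_cycleRange_iff hk' hu] at h'
  -- for `k < k'`, sortedness of the two words forces both `u 0 < u (k + 1)` and `u (k + 1) < u 0`
  have hcross : ∀ {a b : Fin n}, i ≤ (a : ℕ) → a < b →
      (∀ j, a < j → u 0 < u j) → (∀ j : Fin n, i ≤ (j : ℕ) → j < b → u (cycleRange b j) < u 0) →
      False := fun ha hab hR hL =>
    lt_asymm (hR _ (Fin.lt_def.2 (by rw [coe_cycleRange_of_lt hab]; omega))) (hL _ ha hab)
  rcases lt_trichotomy k k' with hlt | heq | hgt
  · exact (hcross hk hlt h.2 h'.1).elim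
  · exact heq
  · exact (hcross hk' hgt h'.2 h.1).elim

lemma exists_isSortedFrom_mul_cycleRange [NeZero n] (hi : i < n) (hu : IsSortedFrom (i + 1) u) :
    ∃ k : Fin n, i ≤ (k : ℕ) ∧ IsSortedFrom i (u * cycleRange k) := by
  -- `k` is the last position after `i` holding a letter below `u 0`, or `i` if there is none
  set S : Finset (Fin n) := {j | i ≤ (j : ℕ) ∧ (i < (j : ℕ) → u j < u 0)}
  have hS : S.Nonempty := ⟨⟨i, hi⟩, by simp [S]⟩
  have hkS := S.max'_mem hS
  set k := S.max' hS
  simp only [S, mem_filter, mem_univ, true_and] at hkS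
  refine ⟨k, hkS.1, (isSortedFrom_mul_cycleRange_iff hkS.1 hu).2
    ⟨fun j hj hjk => ?_, fun j hjk => ?_⟩⟩
  · have hj' := coe_cycleRange_of_lt hjk
    rw [Fin.lt_def] at hjk
    refine lt_of_le_of_lt (hu.monotoneOn ?_ ?_ ?_) (hkS.2 (by omega))
    · simp only [Set.mem_ofPred_eq]; omega
    · simp only [Set.mem_ofPred_eq]; omega
    · rw [Fin.le_def]; omega
  · have hjS : j ∉ S := fun hj => (S.le_max' j hj).not_gt hjk
    have hj0 : j ≠ 0 := ((Fin.zero_le k).trans_lt hjk).ne'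
    rw [Fin.lt_def] at hjk
    simp only [S, mem_filter, mem_univ, true_and, not_and, Classical.not_imp, not_lt] at hjS
    obtain ⟨hij, hle⟩ := hjS (by omega)
    exact lt_of_le_of_ne hle fun h0 => hj0 (u.injective h0).symm

lemma card_filter_isSortedFrom_mul_cycleRange_of_lt (hi : i ≤ n) (u : Perm (Fin n)) :
    #{k : Fin n | IsSortedFrom i (u * cycleRange k) ∧ (k : ℕ) < i} =
      if IsSortedFrom i u then i else 0 := by
  split_ifs with hu
  · conv_rhs => rw [← min_eq_right hi, ← Fin.card_filter_val_lt]
    congr 1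
    ext k
    simp only [mem_filter, mem_univ, true_and, and_iff_right_iff_imp]
    exact fun hk => (isSortedFrom_mul_cycleRange_iff_of_lt hk).2 hu
  · rw [card_eq_zero, filter_eq_empty_iff]
    exact fun k _ h => hu ((isSortedFrom_mul_cycleRange_iff_of_lt h.2).1 h.1)

lemma card_filter_isSortedFrom_mul_cycleRange_of_ge [NeZero n] (hi : i < n) (u : Perm (Fin n)) :
    #{k : Fin n | IsSortedFrom i (u * cycleRange k) ∧ i ≤ (k : ℕ)} =
      if IsSortedFrom (i + 1) u then 1 else 0 := by
  split_ifs with hu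
  · obtain ⟨k, hk, hks⟩ := exists_isSortedFrom_mul_cycleRange hi hu
    refine card_eq_one.2 ⟨k, ?_⟩
    ext k'
    simp only [mem_filter, mem_univ, true_and, mem_singleton]
    exact ⟨fun h => eq_of_isSortedFrom_mul_cycleRange h.2 hk hu h.1 hks, fun h => h ▸ ⟨hks, hk⟩⟩
  · rw [card_eq_zero, filter_eq_empty_iff]
    exact fun k _ h => hu h.1.of_mul_cycleRange

lemma card_filter_isSortedFrom_mul_cycleRange (hi : i < n) (u : Perm (Fin n)) :
    #{k : Fin n | IsSortedFrom i (u * cycleRange k)} =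
      (if IsSortedFrom i u then i else 0) + if IsSortedFrom (i + 1) u then 1 else 0 := by
  have : NeZero n := ⟨by omega⟩
  rw [← card_filter_add_card_filter_not (fun k : Fin n => (k : ℕ) < i), filter_filter,
    filter_filter]
  simp only [not_lt]
  rw [card_filter_isSortedFrom_mul_cycleRange_of_lt hi.le,
    card_filter_isSortedFrom_mul_cycleRange_of_ge hi]

noncomputable def sortedFromSum (n i : ℕ) : MonoidAlgebra ℚ (Perm (Fin n)) :=
  ∑ w with IsSortedFrom i w, MonoidAlgebra.of ℚ (Perm (Fin n)) w

lemma coeff_sortedFromSum (i : ℕ) (w : Perm (Fin n)) :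
    (sortedFromSum n i).coeff w = if IsSortedFrom i w then 1 else 0 := by
  simp [sortedFromSum, MonoidAlgebra.coeff_sum, Finsupp.single_apply]

lemma coeff_mul_tsetlin (x : MonoidAlgebra ℚ (Perm (Fin n))) (u : Perm (Fin n)) :
    (x * tsetlin n).coeff u = ∑ k, x.coeff (u * cycleRange k) := by
  simp [tsetlin, Finset.mul_sum, MonoidAlgebra.coeff_sum, MonoidAlgebra.coeff_mul_single_apply]

lemma sortedFromSum_zero : sortedFromSum n 0 = 1 := by
  rw [sortedFromSum, filter_congr fun w _ => isSortedFrom_zero_iff, filter_eq',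
    if_pos (mem_univ _), sum_singleton, map_one]

lemma sortedFromSum_succ_of_le (h : n ≤ i + 1) : sortedFromSum n (i + 1) = sortedFromSum n i := by
  simp only [sortedFromSum, isSortedFrom_of_le h,
    isSortedFrom_of_le (n := n) (i := i + 1) (by omega)]

lemma sortedFromSum_mul_tsetlin (hi : i < n) :
    sortedFromSum n i * tsetlin n = (i : ℚ) • sortedFromSum n i + sortedFromSum n (i + 1) := by
  ext u
  simp only [coeff_mul_tsetlin, coeff_sortedFromSum, sum_boole,
    card_filter_isSortedFrom_mul_cycleRange hi, MonoidAlgebra.coeff_add, MonoidAlgebra.coeff_smul,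
    Finsupp.add_apply, Finsupp.smul_apply]
  split_ifs <;> simp

lemma sortedFromSum_pred_mul_tsetlin :
    sortedFromSum n (n - 1) * tsetlin n = (n : ℚ) • sortedFromSum n (n - 1) := by
  cases n with
  | zero => simp [tsetlin]
  | succ m =>
    rw [Nat.add_sub_cancel, sortedFromSum_mul_tsetlin (Nat.lt_succ_self m),
      sortedFromSum_succ_of_le le_rfl]
    push_cast
    rw [add_smul, one_smul]

lemma aeval_tsetlin_descPochhammer (hi : i ≤ n) :
    aeval (tsetlin n) (descPochhammer ℚ i) = sortedFromSum n i := by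
  induction i with
  | zero => rw [descPochhammer_zero, map_one, sortedFromSum_zero]
  | succ i ih =>
    rw [descPochhammer_succ_right, map_mul, ih (by omega), map_sub, aeval_X, map_natCast, mul_sub,
      sortedFromSum_mul_tsetlin (by omega), ← nsmul_eq_mul', ← Nat.cast_smul_eq_nsmul ℚ]
    abel

lemma aeval_tsetlin_X_sub_C_mul_descPochhammer :
    aeval (tsetlin n) ((X - C (n : ℚ)) * descPochhammer ℚ (n - 1)) = 0 := by
  rw [mul_comm, map_mul, aeval_tsetlin_descPochhammer (Nat.sub_le n 1), map_sub, aeval_X, aeval_C,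
    mul_sub, sortedFromSum_pred_mul_tsetlin, Algebra.algebraMap_eq_smul_one, mul_smul_comm, mul_one,
    sub_self]

lemma mul_tsetlin_mem_span {d : ℕ} (hd : d ≤ n) {x : MonoidAlgebra ℚ (Perm (Fin n))}
    (hx : x ∈ Submodule.span ℚ (sortedFromSum n '' Set.Iio d)) :
    x * tsetlin n ∈ Submodule.span ℚ (sortedFromSum n '' Set.Iio (d + 1)) := by
  refine Submodule.span_le (p := (Submodule.span ℚ _).comap (LinearMap.mulRight ℚ (tsetlin n))).2
    ?_ hx
  rintro _ ⟨l, hl, rfl⟩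
  have hl : l < d := hl
  simp only [SetLike.mem_coe, Submodule.mem_comap, LinearMap.mulRight_apply,
    sortedFromSum_mul_tsetlin (hl.trans_le hd)]
  exact add_mem (Submodule.smul_mem _ _ (Submodule.subset_span ⟨l, Set.mem_Iio.2 (by omega), rfl⟩))
    (Submodule.subset_span ⟨l + 1, Set.mem_Iio.2 (by omega), rfl⟩)

lemma tsetlin_pow_mem_span {j : ℕ} (hj : j < n) :
    tsetlin n ^ j ∈ Submodule.span ℚ (sortedFromSum n '' Set.Iio (j + 1)) := by
  induction j with
  | zero => exact pow_zero (tsetlin n) ▸ sortedFromSum_zero (n := n) ▸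
      Submodule.subset_span ⟨0, by simp, rfl⟩
  | succ j ih =>
    rw [pow_succ]
    exact mul_tsetlin_mem_span hj.le (ih (by omega))

lemma aeval_tsetlin_mem_span {d : ℕ} (hd : d ≤ n) {p : ℚ[X]} (hp : p.degree < d) :
    aeval (tsetlin n) p ∈ Submodule.span ℚ (sortedFromSum n '' Set.Iio d) := by
  rw [aeval_eq_sum_range]
  refine Submodule.sum_mem _ fun j _ => ?_
  by_cases hj : p.coeff j = 0
  · simp [hj]
  have hjd : j < d := by exact_mod_cast (le_degree_of_ne_zero hj).trans_lt hp
  exact Submodule.smul_mem _ _ <| Submodule.span_mono (Set.image_mono (Set.Iio_subset_Iio hjd))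
    (tsetlin_pow_mem_span (by omega))

lemma coeff_cycleRange_eq_zero_of_mem_span (d : Fin n) {x : MonoidAlgebra ℚ (Perm (Fin n))}
    (hx : x ∈ Submodule.span ℚ (sortedFromSum n '' Set.Iio d)) : x.coeff (cycleRange d) = 0 := by
  induction hx using Submodule.span_induction with
  | mem _ h =>
    obtain ⟨l, hl, rfl⟩ := h
    rw [coeff_sortedFromSum, if_neg (by rw [isSortedFrom_cycleRange_iff]; exact not_le.2 hl)]
  | zero => rfl
  | add x y _ _ hx hy => simp [MonoidAlgebra.coeff_add, hx, hy]
  | smul a x _ hx => simp [MonoidAlgebra.coeff_smul, hx]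

lemma coeff_aeval_tsetlin {p : ℚ[X]} (d : Fin n) (hp : p.natDegree = d) :
    (aeval (tsetlin n) p).coeff (cycleRange d) = p.leadingCoeff := by
  rcases eq_or_ne p 0 with rfl | hp0
  · simp
  have hmonic : (descPochhammer ℚ d).Monic := monic_descPochhammer ℚ d
  set q : ℚ[X] := C p.leadingCoeff * descPochhammer ℚ d
  have hpq : p.degree = q.degree := by
    rw [degree_C_mul (leadingCoeff_ne_zero.2 hp0), degree_eq_natDegree hp0,
      degree_eq_natDegree hmonic.ne_zero, descPochhammer_natDegree, hp]
  have hr : (p - q).degree < (d : ℕ) := by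
    rw [← hp, ← degree_eq_natDegree hp0]
    refine degree_sub_lt_left hpq hp0 ?_
    rw [leadingCoeff_mul, leadingCoeff_C, hmonic.leadingCoeff, mul_one]
  have hq : aeval (tsetlin n) q = p.leadingCoeff • sortedFromSum n d := by
    rw [map_mul, aeval_C, aeval_tsetlin_descPochhammer d.is_lt.le, Algebra.smul_def]
  have hsplit : aeval (tsetlin n) p =
      p.leadingCoeff • sortedFromSum n d + aeval (tsetlin n) (p - q) := by
    rw [map_sub, hq, add_sub_cancel]
  rw [hsplit, MonoidAlgebra.coeff_add, Finsupp.add_apply,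
    coeff_cycleRange_eq_zero_of_mem_span _ (aeval_tsetlin_mem_span d.is_lt.le hr),
    MonoidAlgebra.coeff_smul, Finsupp.smul_apply, coeff_sortedFromSum,
    if_pos ((isSortedFrom_cycleRange_iff _).2 le_rfl), smul_eq_mul, mul_one, add_zero]

lemma aeval_tsetlin_ne_zero {p : ℚ[X]} (hp0 : p ≠ 0) (hp : p.natDegree < n) :
    aeval (tsetlin n) p ≠ 0 := fun h =>
  hp0 <| leadingCoeff_eq_zero.1 <|
    (coeff_aeval_tsetlin ⟨p.natDegree, hp⟩ rfl).symm.trans (by rw [h]; rfl)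

end Tsetlin

open Tsetlin

open Polynomial in
/-- The minimal polynomial of right multiplication by `τ_n` on `ℚ𝔖_n` is
`(x-n) ∏_{k=0}^{n-2} (x-k)`; in particular this operator is diagonalizable with
eigenvalues `{0,1,…,n-2,n}`. -/
theorem stmt_7 (n : ℕ) (hn : 2 ≤ n) :
    minpoly ℚ
        (LinearMap.mulRight ℚ (tsetlin n) :
          Module.End ℚ (MonoidAlgebra ℚ (Perm (Fin n)))) =
      (X - C (n : ℚ)) * ∏ k ∈ Finset.range (n - 1), (X - C (k : ℚ)) := by
  rw [← descPochhammer_eq_prod_range]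
  have hmonic : ((X - C (n : ℚ)) * descPochhammer ℚ (n - 1)).Monic :=
    (monic_X_sub_C _).mul (monic_descPochhammer ℚ _)
  have hdeg : ((X - C (n : ℚ)) * descPochhammer ℚ (n - 1)).natDegree = n := by
    rw [(monic_X_sub_C _).natDegree_mul (monic_descPochhammer ℚ _), natDegree_X_sub_C,
      descPochhammer_natDegree]
    omega
  refine (minpoly.unique' _ _ hmonic ?_ fun q hq => or_iff_not_imp_left.2 fun hq0 h => ?_).symm
  · refine LinearMap.ext fun x => ?_
    rw [LinearMap.aeval_mulRight_apply, aeval_tsetlin_X_sub_C_mul_descPochhammer, mul_zero]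
    rfl
  · have h1 := LinearMap.congr_fun h 1
    rw [LinearMap.aeval_mulRight_apply, one_mul] at h1
    refine aeval_tsetlin_ne_zero hq0 ?_ h1
    rwa [degree_eq_natDegree (Monic.ne_zero hmonic), hdeg, ← natDegree_lt_iff_degree_lt hq0] at hq
end

section
/- Foata's first fundamental transformation \(\phi\), which maps a permutation \(\sigma\) (written in one-line notation) to the permutation whose cycle decomposition is obtained by cutting the word of \(\sigma\) before each left-to-right minimum and reading each factor as a cycle, is a bijection of \(\mathfrak{S}_n\) onto itself, and restricts to a bijection between the set \(X_n\) of permutations with no two consecutive left-to-right minima in \(\sigma \cdot 0\) (i.e., not ending in 1 and with no two adjacent LR-minima) and the set of derangements of \(\mathfrak{S}_n\). -/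
open scoped Classical

open Equiv

variable {n : ℕ}

/-- The one-line word of `σ` (0-based positions, values shifted to `{1,…,n}`), extended by
the sentinel `0` at position `n` (and beyond). -/
def word (σ : Perm (Fin n)) (i : ℕ) : ℕ :=
  if h : i < n then ((σ ⟨i, h⟩ : ℕ) + 1) else 0

/-- Position `i` of the sentinel-extended word `σ·0` is a left-to-right minimum:
every earlier letter is strictly larger. -/
def IsLRMin (σ : Perm (Fin n)) (i : ℕ) : Prop :=
  ∀ j < i, word σ i < word σ j

/-- `X_n`: permutations such that the word `σ·0` has no two adjacent left-to-right
minima (in particular `σ` does not end in the smallest value). -/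
def Xset (n : ℕ) : Set (Perm (Fin n)) :=
  {σ | ¬ ∃ i : ℕ, i + 1 ≤ n ∧ IsLRMin σ i ∧ IsLRMin σ (i + 1)}

/-- The starting position of the factor of `σ` containing position `i`: the largest
left-to-right minimum position `≤ i` (position `0` always qualifies). -/
noncomputable def startPos (σ : Perm (Fin n)) (i : ℕ) : ℕ :=
  sSup {j : ℕ | j ≤ i ∧ IsLRMin σ j}

/-- The (0-indexed) value of `σ` at position `i`, with junk value `0` for `i ≥ n`. -/
def posVal (σ : Perm (Fin n)) (i : ℕ) : ℕ :=
  if h : i < n then (σ ⟨i, h⟩ : ℕ) else 0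

/-- Foata's first fundamental transformation, on values: the image of the letter at
position `i` is the next letter of its factor (the factors being obtained by cutting the
word of `σ` before each left-to-right minimum), the last letter of a factor being sent
back to the first letter of the factor. -/
noncomputable def foataVal (σ : Perm (Fin n)) (i : ℕ) : ℕ :=
  if i + 1 < n ∧ ¬ IsLRMin σ (i + 1) then posVal σ (i + 1)
  else posVal σ (startPos σ i)

/-! ### Auxiliary development -/

section Aux

variable (σ : Perm (Fin n))

lemma posVal_eq {i : ℕ} (h : i < n) : posVal σ i = (σ ⟨i, h⟩ : ℕ) := dif_pos h

lemma word_eq {i : ℕ} (h : i < n) : word σ i = (σ ⟨i, h⟩ : ℕ) + 1 := dif_pos h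

lemma word_eq' {i : ℕ} (h : i < n) : word σ i = posVal σ i + 1 := by
  rw [word_eq σ h, posVal_eq σ h]

lemma posVal_lt {i : ℕ} (h : i < n) : posVal σ i < n := by
  rw [posVal_eq σ h]; exact (σ ⟨i, h⟩).isLt

lemma posVal_injOn {i j : ℕ} (hi : i < n) (hj : j < n)
    (h : posVal σ i = posVal σ j) : i = j := by
  rw [posVal_eq σ hi, posVal_eq σ hj] at h
  have := σ.injective (Fin.ext h)
  simpa using congrArg Fin.val this

lemma lrmin_zero : IsLRMin σ 0 := fun j hj => absurd hj (Nat.not_lt_zero j)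

lemma lrmin_n : IsLRMin σ n := by
  intro j hj
  rw [word_eq σ hj]
  have : word σ n = 0 := dif_neg (lt_irrefl n)
  omega

lemma lrmin_iff_posVal {i : ℕ} (hi : i < n) :
    IsLRMin σ i ↔ ∀ j < i, posVal σ i < posVal σ j := by
  constructor
  · intro h j hj
    have := h j hj
    rw [word_eq' σ hi, word_eq' σ (hj.trans hi)] at this
    omega
  · intro h j hj
    rw [word_eq' σ hi, word_eq' σ (hj.trans hi)]
    have := h j hj
    omega

lemma startSet_nonempty (i : ℕ) : {j : ℕ | j ≤ i ∧ IsLRMin σ j}.Nonempty :=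
  ⟨0, Nat.zero_le i, lrmin_zero σ⟩

lemma startSet_bdd (i : ℕ) : BddAbove {j : ℕ | j ≤ i ∧ IsLRMin σ j} :=
  ⟨i, fun _ hj => hj.1⟩

lemma startPos_spec (i : ℕ) : startPos σ i ≤ i ∧ IsLRMin σ (startPos σ i) :=
  Nat.sSup_mem (startSet_nonempty σ i) (startSet_bdd σ i)

lemma startPos_le (i : ℕ) : startPos σ i ≤ i := (startPos_spec σ i).1

lemma startPos_lrmin (i : ℕ) : IsLRMin σ (startPos σ i) := (startPos_spec σ i).2

lemma le_startPos {j i : ℕ} (hj : j ≤ i) (h : IsLRMin σ j) : j ≤ startPos σ i :=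
  le_csSup (startSet_bdd σ i) ⟨hj, h⟩

lemma startPos_of_lrmin {i : ℕ} (h : IsLRMin σ i) : startPos σ i = i :=
  le_antisymm (startPos_le σ i) (le_startPos σ le_rfl h)

/-- The value at the start of the factor of `i` is the minimum of the prefix `[0,i]`. -/
lemma startPos_min {i : ℕ} (hi : i < n) {j : ℕ} (hj : j ≤ i) :
    posVal σ (startPos σ i) ≤ posVal σ j := by
  obtain ⟨m, hm, hmin⟩ := Finset.exists_min_image (Finset.range (i + 1)) (posVal σ)
    ⟨0, Finset.mem_range.mpr (Nat.succ_pos i)⟩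
  have hmi : m ≤ i := Nat.lt_succ_iff.mp (Finset.mem_range.mp hm)
  have hmn : m < n := lt_of_le_of_lt hmi hi
  have hmlr : IsLRMin σ m := by
    rw [lrmin_iff_posVal σ hmn]
    intro k hk
    have h1 := hmin k (Finset.mem_range.mpr (by omega))
    have h2 : posVal σ m ≠ posVal σ k := fun h => (Nat.ne_of_lt hk).symm
      (posVal_injOn σ hmn (lt_of_le_of_lt (le_of_lt (lt_of_lt_of_le hk hmi)) hi) h)
    omega
  have hms : m ≤ startPos σ i := le_startPos σ hmi hmlr
  have hme : m = startPos σ i := by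
    rcases Nat.lt_or_ge m (startPos σ i) with h | h
    · exfalso
      have h1 := (lrmin_iff_posVal σ (lt_of_le_of_lt (startPos_le σ i) hi)).mp
        (startPos_lrmin σ i) m h
      have h2 := hmin (startPos σ i) (Finset.mem_range.mpr (by
        have := startPos_le σ i; omega))
      omega
    · omega
  rw [← hme]
  exact hmin j (Finset.mem_range.mpr (by omega))

/-- Foata's transformation on positions. -/
noncomputable def gmap (σ : Perm (Fin n)) (i : ℕ) : ℕ :=
  if i + 1 < n ∧ ¬ IsLRMin σ (i + 1) then i + 1 else startPos σ i

lemma foataVal_eq (i : ℕ) : foataVal σ i = posVal σ (gmap σ i) := by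
  rw [foataVal, gmap, apply_ite (posVal σ)]

lemma gmap_lt {i : ℕ} (hi : i < n) : gmap σ i < n := by
  rw [gmap]; split
  · next h => exact h.1
  · exact lt_of_le_of_lt (startPos_le σ i) hi

lemma gmap_injOn {i j : ℕ} (hi : i < n) (hj : j < n) (h : gmap σ i = gmap σ j) :
    i = j := by
  have key : ∀ a b : ℕ, a < n → b < n → a < b → gmap σ a ≠ gmap σ b := by
    intro a b ha hb hab heq
    rw [gmap, gmap] at heq
    by_cases ca : a + 1 < n ∧ ¬ IsLRMin σ (a + 1) <;>
      by_cases cb : b + 1 < n ∧ ¬ IsLRMin σ (b + 1)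
    · rw [if_pos ca, if_pos cb] at heq; omega
    · rw [if_pos ca, if_neg cb] at heq
      exact ca.2 (heq ▸ startPos_lrmin σ b)
    · rw [if_neg ca, if_pos cb] at heq
      exact cb.2 (heq ▸ startPos_lrmin σ a)
    · rw [if_neg ca, if_neg cb] at heq
      push_neg at ca
      have ha1 : a + 1 < n := by omega
      have hlr : IsLRMin σ (a + 1) := ca ha1
      have h1 : a + 1 ≤ startPos σ b := le_startPos σ (by omega) hlr
      have h2 := startPos_le σ a
      omega
  rcases lt_trichotomy i j with h' | h' | h'
  · exact absurd h (key i j hi hj h')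
  · exact h'
  · exact absurd h.symm (key j i hj hi h')

/-- Foata's transformation, as a function on `Fin n`. -/
noncomputable def toFun (σ : Perm (Fin n)) : Fin n → Fin n :=
  fun v => σ ⟨gmap σ (σ.symm v), gmap_lt σ (σ.symm v).isLt⟩

lemma toFun_inj : Function.Injective (toFun σ) := by
  intro u v h
  have h1 : gmap σ ((σ.symm u : ℕ)) = gmap σ ((σ.symm v : ℕ)) :=
    congrArg Fin.val (σ.injective h)
  have h2 : ((σ.symm u : ℕ)) = ((σ.symm v : ℕ)) :=
    gmap_injOn σ (σ.symm u).isLt (σ.symm v).isLt h1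
  have := Fin.ext h2 (a := σ.symm u) (b := σ.symm v)
  simpa using congrArg σ this

/-- Foata's transformation, as a permutation. -/
noncomputable def toPerm (σ : Perm (Fin n)) : Perm (Fin n) :=
  Equiv.ofBijective (toFun σ) (Finite.injective_iff_bijective.mp (toFun_inj σ))

lemma toPerm_apply (v : Fin n) : toPerm σ v = toFun σ v := rfl

lemma toPerm_apply_pos {i : ℕ} (h : i < n) :
    toPerm σ (σ ⟨i, h⟩) = σ ⟨gmap σ i, gmap_lt σ h⟩ := by
  rw [toPerm_apply, toFun]
  congr 2
  simp

lemma startPos_gmap {i : ℕ} (hi : i < n) : startPos σ (gmap σ i) = startPos σ i := by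
  rw [gmap]; split
  · next h =>
    rw [startPos, startPos]
    congr 1
    ext j
    simp only [Set.mem_setOf_eq]
    constructor
    · rintro ⟨hj, hlr⟩
      refine ⟨?_, hlr⟩
      rcases Nat.lt_or_ge j (i + 1) with h' | h'
      · omega
      · exact absurd (le_antisymm hj h' ▸ hlr) h.2
    · rintro ⟨hj, hlr⟩; exact ⟨by omega, hlr⟩
  · exact startPos_of_lrmin σ (startPos_lrmin σ i)

lemma gmap_iter_lt (k : ℕ) {i : ℕ} (hi : i < n) : (gmap σ)^[k] i < n := by
  induction k with
  | zero => simpa using hi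
  | succ k ih => rw [Function.iterate_succ_apply']; exact gmap_lt σ ih

lemma gmap_iter_start (k : ℕ) {i : ℕ} (hi : i < n) :
    startPos σ ((gmap σ)^[k] i) = startPos σ i := by
  induction k with
  | zero => simp
  | succ k ih =>
    rw [Function.iterate_succ_apply', startPos_gmap σ (gmap_iter_lt σ k hi), ih]

lemma toPerm_pow (k : ℕ) {i : ℕ} (hi : i < n) :
    (toPerm σ ^ k) (σ ⟨i, hi⟩) = σ ⟨(gmap σ)^[k] i, gmap_iter_lt σ k hi⟩ := by
  induction k with
  | zero => simp
  | succ k ih =>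
    rw [pow_succ', Perm.mul_apply, ih, toPerm_apply_pos σ (gmap_iter_lt σ k hi)]
    exact congrArg σ (Fin.ext (show gmap σ ((gmap σ)^[k] i) = (gmap σ)^[k+1] i from
      (Function.iterate_succ_apply' _ _ _).symm))

lemma exists_iter_start_aux : ∀ m : ℕ, ∀ i : ℕ, i < n → n - i ≤ m →
    ∃ k : ℕ, (gmap σ)^[k] i = startPos σ i := by
  intro m
  induction m with
  | zero => intro i hi hle; omega
  | succ m ih =>
    intro i hi hle
    by_cases c : i + 1 < n ∧ ¬ IsLRMin σ (i + 1)
    · have hg : gmap σ i = i + 1 := if_pos c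
      obtain ⟨k, hk⟩ := ih (i + 1) c.1 (by omega)
      refine ⟨k + 1, ?_⟩
      rw [Function.iterate_succ_apply, hg, hk, ← startPos_gmap σ hi, hg]
    · exact ⟨1, by rw [Function.iterate_one, gmap, if_neg c]⟩

lemma exists_iter_start {i : ℕ} (hi : i < n) :
    ∃ k : ℕ, (gmap σ)^[k] i = startPos σ i :=
  exists_iter_start_aux σ n i hi (by omega)

/-- The set of elements in the cycle of `v` under `τ`. -/
noncomputable def cycSet (τ : Perm (Fin n)) (v : Fin n) : Finset (Fin n) :=
  Finset.univ.filter (fun u => τ.SameCycle v u)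

lemma self_mem_cycSet (τ : Perm (Fin n)) (v : Fin n) : v ∈ cycSet τ v := by
  simp [cycSet, Perm.SameCycle.refl]

/-- The minimum of the cycle of `v` under `τ`. -/
noncomputable def minOrbit (τ : Perm (Fin n)) (v : Fin n) : Fin n :=
  (cycSet τ v).min' ⟨v, self_mem_cycSet τ v⟩

lemma pow_mem_cycSet (τ : Perm (Fin n)) (v : Fin n) (k : ℕ) :
    (τ ^ k) v ∈ cycSet τ v := by
  simp only [cycSet, Finset.mem_filter, Finset.mem_univ, true_and]
  exact ⟨(k : ℤ), by rw [zpow_natCast]⟩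

/-- The minimum of the Foata cycle through `σ i` is the value at the start of the
factor of `i`. -/
lemma minOrbit_toPerm {i : ℕ} (hi : i < n) :
    minOrbit (toPerm σ) (σ ⟨i, hi⟩) =
      σ ⟨startPos σ i, lt_of_le_of_lt (startPos_le σ i) hi⟩ := by
  apply le_antisymm
  · apply Finset.min'_le
    obtain ⟨k, hk⟩ := exists_iter_start σ hi
    have := pow_mem_cycSet (toPerm σ) (σ ⟨i, hi⟩) k
    rwa [toPerm_pow σ k hi, show (⟨(gmap σ)^[k] i, gmap_iter_lt σ k hi⟩ : Fin n) =
      ⟨startPos σ i, lt_of_le_of_lt (startPos_le σ i) hi⟩ from Fin.ext hk] at this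
  · apply Finset.le_min'
    intro u hu
    simp only [cycSet, Finset.mem_filter, Finset.mem_univ, true_and] at hu
    obtain ⟨k, -, hk⟩ := hu.exists_pow_eq'
    rw [toPerm_pow σ k hi] at hk
    subst hk
    have hjn : (gmap σ)^[k] i < n := gmap_iter_lt σ k hi
    have h1 : posVal σ (startPos σ ((gmap σ)^[k] i)) ≤ posVal σ ((gmap σ)^[k] i) :=
      startPos_min σ hjn le_rfl
    rw [gmap_iter_start σ k hi] at h1
    rw [Fin.le_def]
    rwa [← posVal_eq σ (lt_of_le_of_lt (startPos_le σ i) hi), ← posVal_eq σ hjn]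

end Aux

/-- The set of values occupied by positions `< i`. -/
noncomputable def preSet (σ : Perm (Fin n)) (i : ℕ) : Finset (Fin n) :=
  Finset.univ.filter (fun v : Fin n => ∃ j : ℕ, j < i ∧ j < n ∧ posVal σ j = (v : ℕ))

lemma mem_preSet {σ : Perm (Fin n)} {i : ℕ} {v : Fin n} :
    v ∈ preSet σ i ↔ ∃ j : ℕ, j < i ∧ j < n ∧ posVal σ j = (v : ℕ) := by
  simp [preSet]

lemma preSet_congr {σ π : Perm (Fin n)} {i : ℕ}
    (h : ∀ j, j < i → j < n → posVal σ j = posVal π j) : preSet σ i = preSet π i := by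
  ext v
  simp only [mem_preSet]
  constructor
  · rintro ⟨j, h1, h2, h3⟩; exact ⟨j, h1, h2, (h j h1 h2) ▸ h3⟩
  · rintro ⟨j, h1, h2, h3⟩; exact ⟨j, h1, h2, (h j h1 h2).symm ▸ h3⟩

lemma pos_mem_preSet (σ : Perm (Fin n)) {j i : ℕ} (hji : j < i) (hj : j < n) :
    σ ⟨j, hj⟩ ∈ preSet σ i :=
  mem_preSet.mpr ⟨j, hji, hj, posVal_eq σ hj⟩

lemma self_not_mem_preSet (σ : Perm (Fin n)) {i : ℕ} (hi : i < n) :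
    σ ⟨i, hi⟩ ∉ preSet σ i := by
  intro h
  obtain ⟨j, h1, h2, h3⟩ := mem_preSet.mp h
  rw [← posVal_eq σ hi] at h3
  have := posVal_injOn σ h2 hi h3
  omega

/-- Characterization of left-to-right minima in terms of the Foata image. -/
lemma lrmin_succ_iff (σ : Perm (Fin n)) {j : ℕ} (hj1 : j + 1 < n) (hj : j < n) :
    IsLRMin σ (j + 1) ↔ toPerm σ (σ ⟨j, hj⟩) ∈ preSet σ (j + 1) := by
  constructor
  · intro h
    rw [toPerm_apply_pos σ hj]
    have hg : gmap σ j = startPos σ j := by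
      rw [gmap, if_neg]; push_neg; intro _; exact h
    refine mem_preSet.mpr ⟨startPos σ j, by have := startPos_le σ j; omega,
      lt_of_le_of_lt (startPos_le σ j) hj, ?_⟩
    rw [posVal_eq σ (lt_of_le_of_lt (startPos_le σ j) hj)]
    exact congrArg (fun x => ((σ x : Fin n) : ℕ)) (Fin.ext hg.symm)
  · intro h
    by_contra hn
    rw [toPerm_apply_pos σ hj] at h
    have hg : gmap σ j = j + 1 := if_pos ⟨hj1, hn⟩
    obtain ⟨m, hm1, hm2, hm3⟩ := mem_preSet.mp h
    rw [← posVal_eq σ (gmap_lt σ hj)] at hm3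
    have := posVal_injOn σ hm2 (gmap_lt σ hj) hm3
    omega

/-- At an LR-minimum position, the value is the largest cycle-minimum of the Foata image
among the values not yet used. -/
lemma val_of_lrmin (σ : Perm (Fin n)) {i : ℕ} (hi : i < n) (h : IsLRMin σ i) :
    σ ⟨i, hi⟩ = ((Finset.univ \ preSet σ i).image (minOrbit (toPerm σ))).max'
      ⟨σ ⟨i, hi⟩, Finset.mem_image.mpr ⟨σ ⟨i, hi⟩,
        Finset.mem_sdiff.mpr ⟨Finset.mem_univ _, self_not_mem_preSet σ hi⟩,
        by rw [minOrbit_toPerm σ hi]; exact congrArg σ (Fin.ext (startPos_of_lrmin σ h))⟩⟩ := by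
  apply le_antisymm
  · apply Finset.le_max'
    exact Finset.mem_image.mpr ⟨σ ⟨i, hi⟩,
      Finset.mem_sdiff.mpr ⟨Finset.mem_univ _, self_not_mem_preSet σ hi⟩,
      by rw [minOrbit_toPerm σ hi]; exact congrArg σ (Fin.ext (startPos_of_lrmin σ h))⟩
  · apply Finset.max'_le
    intro u hu
    obtain ⟨w, hw, rfl⟩ := Finset.mem_image.mp hu
    have hwp := (Finset.mem_sdiff.mp hw).2
    have hmn : ((σ.symm w : ℕ)) < n := (σ.symm w).isLt
    have hwm : w = σ ⟨(σ.symm w : ℕ), hmn⟩ := by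
      rw [show (⟨(σ.symm w : ℕ), hmn⟩ : Fin n) = σ.symm w from Fin.ext rfl]
      simp
    have him : i ≤ (σ.symm w : ℕ) := by
      by_contra h'
      exact hwp (hwm ▸ pos_mem_preSet σ (by omega) hmn)
    rw [hwm, minOrbit_toPerm σ hmn]
    have h1 : i ≤ startPos σ (σ.symm w : ℕ) := le_startPos σ him h
    rcases eq_or_lt_of_le h1 with heq | hlt
    · exact le_of_eq (congrArg σ (Fin.ext heq.symm))
    · have h2 := (lrmin_iff_posVal σ (lt_of_le_of_lt (startPos_le σ _) hmn)).mp
        (startPos_lrmin σ (σ.symm w : ℕ)) i hlt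
      rw [Fin.le_def]
      rw [← posVal_eq σ (lt_of_le_of_lt (startPos_le σ _) hmn), ← posVal_eq σ hi]
      omega

lemma toPerm_injective : Function.Injective (toPerm (n := n)) := by
  intro σ π h
  have key : ∀ i : ℕ, i < n → posVal σ i = posVal π i := by
    intro i
    induction i using Nat.strong_induction_on with
    | _ i ih =>
      intro hi
      have hpre : preSet σ i = preSet π i :=
        preSet_congr (fun j hj hj' => ih j hj hj')
      have lrcase : IsLRMin σ i → IsLRMin π i → posVal σ i = posVal π i := by
        intro h1 h2
        rw [posVal_eq σ hi, posVal_eq π hi]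
        have e1 := val_of_lrmin σ hi h1
        have e2 := val_of_lrmin π hi h2
        have hset : (Finset.univ \ preSet σ i).image (minOrbit (toPerm σ))
            = (Finset.univ \ preSet π i).image (minOrbit (toPerm π)) := by
          rw [h, hpre]
        have hmax : ∀ (s t : Finset (Fin n)) (hs : s.Nonempty) (ht : t.Nonempty),
            s = t → s.max' hs = t.max' ht := by
          rintro s t hs ht rfl; rfl
        exact congrArg Fin.val (e1.trans ((hmax _ _ _ _ hset).trans e2.symm))
      match i with
      | 0 => exact lrcase (lrmin_zero σ) (lrmin_zero π)
      | j + 1 =>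
        have hj : j < n := by omega
        have hσπj : σ ⟨j, hj⟩ = π ⟨j, hj⟩ := by
          apply Fin.ext
          rw [← posVal_eq σ hj, ← posVal_eq π hj]
          exact ih j (by omega) hj
        have hlr : IsLRMin σ (j + 1) ↔ IsLRMin π (j + 1) := by
          rw [lrmin_succ_iff σ hi hj, lrmin_succ_iff π hi hj, h, hσπj, hpre]
        by_cases hc : IsLRMin σ (j + 1)
        · exact lrcase hc (hlr.mp hc)
        · have hπc : ¬ IsLRMin π (j + 1) := fun h' => hc (hlr.mpr h')
          have e1 : toPerm σ (σ ⟨j, hj⟩) = σ ⟨j + 1, hi⟩ := by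
            rw [toPerm_apply_pos σ hj]
            exact congrArg σ (Fin.ext (if_pos ⟨hi, hc⟩))
          have e2 : toPerm π (π ⟨j, hj⟩) = π ⟨j + 1, hi⟩ := by
            rw [toPerm_apply_pos π hj]
            exact congrArg π (Fin.ext (if_pos ⟨hi, hπc⟩))
          rw [posVal_eq σ hi, posVal_eq π hi, ← e1, ← e2, h, hσπj]
  apply Equiv.ext
  intro x
  apply Fin.ext
  exact (posVal_eq σ x.isLt).symm.trans ((key x x.isLt).trans (posVal_eq π x.isLt))

lemma toPerm_fixed_iff (σ : Perm (Fin n)) :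
    (∃ v, toPerm σ v = v) ↔ ∃ i, i + 1 ≤ n ∧ IsLRMin σ i ∧ IsLRMin σ (i + 1) := by
  constructor
  · rintro ⟨v, hv⟩
    have hin : ((σ.symm v : ℕ)) < n := (σ.symm v).isLt
    have hveq : σ ⟨(σ.symm v : ℕ), hin⟩ = v := by
      rw [show (⟨(σ.symm v : ℕ), hin⟩ : Fin n) = σ.symm v from Fin.ext rfl]
      simp
    have hv' : toPerm σ (σ ⟨(σ.symm v : ℕ), hin⟩) = σ ⟨(σ.symm v : ℕ), hin⟩ := by
      rw [hveq, hv]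
    rw [toPerm_apply_pos σ hin] at hv'
    have hg : gmap σ (σ.symm v : ℕ) = (σ.symm v : ℕ) := congrArg Fin.val (σ.injective hv')
    refine ⟨(σ.symm v : ℕ), by omega, ?_⟩
    rw [gmap] at hg
    by_cases c : (σ.symm v : ℕ) + 1 < n ∧ ¬ IsLRMin σ ((σ.symm v : ℕ) + 1)
    · rw [if_pos c] at hg; omega
    · rw [if_neg c] at hg
      push_neg at c
      refine ⟨hg ▸ startPos_lrmin σ _, ?_⟩
      rcases Nat.lt_or_ge ((σ.symm v : ℕ) + 1) n with h' | h'
      · exact c h'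
      · have : (σ.symm v : ℕ) + 1 = n := by omega
        rw [this]
        exact lrmin_n σ
  · rintro ⟨i, hin, h1, h2⟩
    have hi : i < n := by omega
    refine ⟨σ ⟨i, hi⟩, ?_⟩
    rw [toPerm_apply_pos σ hi]
    refine congrArg σ (Fin.ext ?_)
    show gmap σ i = i
    have hc : ¬ (i + 1 < n ∧ ¬ IsLRMin σ (i + 1)) := by push_neg; intro _; exact h2
    rw [gmap, if_neg hc]
    exact startPos_of_lrmin σ h1


/-- Foata's first fundamental transformation `φ` is a bijection of `𝔖_n` onto itself which
restricts to a bijection between `X_n` (no two adjacent LR-minima in `σ·0`) and the set of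
derangements. -/
theorem stmt_9 (n : ℕ) :
    ∃ Φ : Perm (Fin n) ≃ Perm (Fin n),
      (∀ (σ : Perm (Fin n)) (v : Fin n), ((Φ σ) v : ℕ) = foataVal σ (σ.symm v)) ∧
      (∀ σ : Perm (Fin n), σ ∈ Xset n ↔ ∀ v, Φ σ v ≠ v) := by
  refine ⟨Equiv.ofBijective toPerm
    (Finite.injective_iff_bijective.mp toPerm_injective), ?_, ?_⟩
  · intro σ v
    show ((toPerm σ) v : ℕ) = _
    rw [toPerm_apply, toFun, foataVal_eq, posVal_eq σ (gmap_lt σ (σ.symm v).isLt)]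
  · intro σ
    show σ ∈ Xset n ↔ ∀ v, toPerm σ v ≠ v
    rw [Xset, Set.mem_setOf_eq]
    simp only [← toPerm_fixed_iff σ, not_exists]
end

section
/- The set \(X_n\) of permutations of \(\mathfrak{S}_n\) with no two consecutive left-to-right minima (including the sentinel-0 convention) is a lower ideal (order ideal) for the left weak order on \(\mathfrak{S}_n\): if \(\sigma \in X_n\) and \(\pi \le \sigma\) in left weak order, then \(\pi \in X_n\). -/
open Equiv

variable {n : ℕ}

/-- The number of inversions of `σ`. -/
noncomputable def invCount (σ : Perm (Fin n)) : ℕ :=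
  Nat.card {p : Fin n × Fin n // p.1 < p.2 ∧ σ p.2 < σ p.1}

/-- Covering relation of the left weak order: `τ = s_i σ` (with `s_i` the transposition of
the values `i, i+1`) with one more inversion. -/
def WeakCover (σ τ : Perm (Fin n)) : Prop :=
  ∃ (i : ℕ) (h : i + 1 < n),
    τ = Equiv.swap (⟨i, Nat.lt_of_succ_lt h⟩ : Fin n) ⟨i + 1, h⟩ * σ ∧
    invCount τ = invCount σ + 1

/-- The left weak order on `𝔖_n`. -/
def WeakLe (π σ : Perm (Fin n)) : Prop := Relation.ReflTransGen WeakCover π σ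

lemma swap_adj_lt {i : ℕ} (h : i + 1 < n) (u v : Fin n)
    (huv : u < v) (hne : ¬(u = (⟨i, Nat.lt_of_succ_lt h⟩ : Fin n) ∧ v = ⟨i+1, h⟩)) :
    Equiv.swap (⟨i, Nat.lt_of_succ_lt h⟩ : Fin n) ⟨i+1, h⟩ u
      < Equiv.swap (⟨i, Nat.lt_of_succ_lt h⟩ : Fin n) ⟨i+1, h⟩ v := by
  rw [Equiv.swap_apply_def, Equiv.swap_apply_def]
  split_ifs <;>
    simp only [Fin.lt_def, Fin.ext_iff, not_and_or] at * <;> omega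

lemma cover_pos_lt {σ τ : Perm (Fin n)} {i : ℕ} (h : i + 1 < n)
    (hτ : τ = Equiv.swap (⟨i, Nat.lt_of_succ_lt h⟩ : Fin n) ⟨i+1, h⟩ * σ)
    (hinv : invCount τ = invCount σ + 1) :
    σ⁻¹ ⟨i, Nat.lt_of_succ_lt h⟩ < σ⁻¹ ⟨i+1, h⟩ := by
  by_contra hcon
  have hne : (⟨i, Nat.lt_of_succ_lt h⟩ : Fin n) ≠ ⟨i+1, h⟩ := by
    simp [Fin.ext_iff]
  have hne' : σ⁻¹ (⟨i+1, h⟩ : Fin n) ≠ σ⁻¹ ⟨i, Nat.lt_of_succ_lt h⟩ := by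
    intro hcc; exact hne ((σ⁻¹).injective hcc).symm
  have hlt : σ⁻¹ (⟨i+1, h⟩ : Fin n) < σ⁻¹ ⟨i, Nat.lt_of_succ_lt h⟩ :=
    lt_of_le_of_ne (not_lt.mp hcon) hne'
  -- inversion set of τ included in that of σ
  have hsub : ∀ p : Fin n × Fin n, p.1 < p.2 ∧ τ p.2 < τ p.1 →
      p.1 < p.2 ∧ σ p.2 < σ p.1 := by
    rintro ⟨x, y⟩ ⟨hxy, hτxy⟩
    refine ⟨hxy, ?_⟩
    by_contra hsc
    have hσlt : σ x < σ y := lt_of_le_of_ne (not_lt.mp hsc)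
      (fun e => absurd (σ.injective e) (ne_of_lt hxy))
    by_cases hab : σ x = (⟨i, Nat.lt_of_succ_lt h⟩ : Fin n) ∧ σ y = ⟨i+1, h⟩
    · have hx : x = σ⁻¹ (⟨i, Nat.lt_of_succ_lt h⟩ : Fin n) := by
        rw [← hab.1]; simp
      have hy : y = σ⁻¹ (⟨i+1, h⟩ : Fin n) := by
        rw [← hab.2]; simp
      rw [hx, hy] at hxy
      exact absurd hxy (not_lt.mpr (le_of_lt hlt))
    · have := swap_adj_lt h (σ x) (σ y) hσlt hab
      rw [hτ] at hτxy
      simp only [Perm.mul_apply] at hτxy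
      exact absurd this (not_lt.mpr (le_of_lt hτxy))
  have hle : invCount τ ≤ invCount σ := by
    unfold invCount
    refine Nat.card_le_card_of_injective
      (fun p => ⟨p.1, hsub p.1 p.2⟩) ?_
    intro p q hpq
    cases p; cases q; simpa using hpq
  omega

lemma cover_lrmin {σ τ : Perm (Fin n)} (hc : WeakCover σ τ) {k : ℕ}
    (hk : IsLRMin σ k) : IsLRMin τ k := by
  obtain ⟨i, h, hτ, hinv⟩ := hc
  have hpq := cover_pos_lt h hτ hinv
  intro j hj
  have hkj := hk j hj
  unfold word at *
  by_cases hkn : k < n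
  · have hjn : j < n := lt_trans hj hkn
    rw [dif_pos hkn, dif_pos hjn] at hkj ⊢
    have hσ : σ ⟨k, hkn⟩ < σ ⟨j, hjn⟩ := by
      rw [Fin.lt_def]; omega
    have hne : ¬(σ ⟨k, hkn⟩ = (⟨i, Nat.lt_of_succ_lt h⟩ : Fin n) ∧
        σ ⟨j, hjn⟩ = ⟨i+1, h⟩) := by
      rintro ⟨h1, h2⟩
      have hx : (⟨k, hkn⟩ : Fin n) = σ⁻¹ ⟨i, Nat.lt_of_succ_lt h⟩ := by
        rw [← h1]; simp
      have hy : (⟨j, hjn⟩ : Fin n) = σ⁻¹ ⟨i+1, h⟩ := by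
        rw [← h2]; simp
      have e1 : k = (σ⁻¹ (⟨i, Nat.lt_of_succ_lt h⟩ : Fin n)).val := congrArg Fin.val hx
      have e2 : j = (σ⁻¹ (⟨i+1, h⟩ : Fin n)).val := congrArg Fin.val hy
      have e3 := Fin.lt_def.mp hpq
      omega
    have := swap_adj_lt h (σ ⟨k, hkn⟩) (σ ⟨j, hjn⟩) hσ hne
    rw [hτ]
    simp only [Perm.mul_apply]
    exact Nat.succ_lt_succ this
  · rw [dif_neg hkn] at hkj ⊢
    by_cases hjn : j < n
    · rw [dif_pos hjn]; omega
    · rw [dif_neg hjn] at hkj; omega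

lemma cover_mem {σ τ : Perm (Fin n)} (hc : WeakCover σ τ) (hτ : τ ∈ Xset n) :
    σ ∈ Xset n := by
  intro hσ
  obtain ⟨i, hi, h1, h2⟩ := hσ
  exact hτ ⟨i, hi, cover_lrmin hc h1, cover_lrmin hc h2⟩

/-- `X_n` is a lower ideal of the left weak order: if `σ ∈ X_n` and `π ≤ σ` in left weak
order then `π ∈ X_n`. -/
theorem stmt_10 (n : ℕ) (σ π : Perm (Fin n)) (hσ : σ ∈ Xset n) (h : WeakLe π σ) :
    π ∈ Xset n := by
  unfold WeakLe at h
  revert hσ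
  induction h with
  | refl => exact id
  | tail _ hbc ih => exact fun hc => ih (cover_mem hbc hc)
end

section
/- The maximal elements of the weak-order ideal \(X_n\) are exactly the permutations \(w_I = w_{i_1} \blacktriangleright \cdots \blacktriangleright w_{i_r}\), where \(I=(i_1,\dots,i_r)\) runs over compositions of \(n\) with no part equal to 1, \(w_i\) denotes the permutation \(1\,i\,(i-1)\cdots 2\) of \(\{1,\dots,i\}\), and \(\alpha \blacktriangleright \beta\) denotes the shifted concatenation \(\alpha[\ell]\cdot\beta\) (shift all letters of \(\alpha\) by \(\ell\) and concatenate with \(\beta \in \mathfrak{S}_\ell\)). In particular, the number of maximal elements of \(X_n\) is the number of compositions of \(n\) into parts \(\ge 2\) (a shifted Fibonacci number). -/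
/-!
For `w_I`, the left-to-right minima of the word `w_I·0` are exactly the block boundaries of `I`, so
`w_I ∈ X_n` iff `I` has no part `1`. An ascent (`v` before `v + 1`) of `w_I` always consists of the
first and the last entry of a block, and swapping it makes the last position of the block a new
left-to-right minimum next to the following boundary; hence `w_I` is maximal.

Conversely, `X_n` is an order ideal, so `σ` is maximal iff every ascent swap leaves `X_n`, i.e. iff
for every ascent `σ a + 1 = σ b` with `a < b` all other entries before `b` exceed `σ a`. Cutting
`σ` at its left-to-right minima gives a composition `I`, and a downward induction on positions
shows `σ = w_I`: if `σ` agrees with `w_I` after `p`, then `σ p` is one of the values `w_I` takes up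
to `p`, and the ascent condition leaves only `w_I p`.
-/

open Equiv

variable {n : ℕ}

/-- The (0-indexed) value at position `p` of the left-shifted concatenation
`w_I = w_{i_1} ▶ ⋯ ▶ w_{i_r}` associated with the composition `I = c` of `n`, where
`w_i = 1 i (i-1) ⋯ 2`: within the `b`-th block (of length `m`, starting at position
`s = sizeUpTo b`, with value offset `t = n - sizeUpTo (b+1)`), the word is
`(1+t) (m+t) (m-1+t) ⋯ (2+t)` (written 1-indexed). -/
def wIval (c : Composition n) (p : Fin n) : ℕ :=
  let b := c.index p
  let j := (p : ℕ) - c.sizeUpTo b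
  (n - c.sizeUpTo ((b : ℕ) + 1)) + (if j = 0 then 0 else c.blocksFun b - j)

/-- A maximal element of `X_n` for the left weak order. -/
def IsMaxX (n : ℕ) (σ : Perm (Fin n)) : Prop :=
  σ ∈ Xset n ∧ ∀ τ ∈ Xset n, WeakLe σ τ → τ = σ

section LRMin

variable {σ : Perm (Fin n)}

lemma word_of_lt (σ : Perm (Fin n)) {i : ℕ} (h : i < n) : word σ i = σ ⟨i, h⟩ + 1 :=
  dif_pos h

@[simp]
lemma word_coe (σ : Perm (Fin n)) (p : Fin n) : word σ p = σ p + 1 :=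
  word_of_lt σ p.2

lemma word_of_le (σ : Perm (Fin n)) {i : ℕ} (h : n ≤ i) : word σ i = 0 :=
  dif_neg (by omega)

lemma IsLRMin.le {i : ℕ} (h : IsLRMin σ i) : i ≤ n := by
  by_contra! hi
  simpa [word_of_le σ le_rfl] using h n hi

lemma isLRMin_self (σ : Perm (Fin n)) : IsLRMin σ n := fun j hj => by
  rw [word_of_le σ le_rfl, word_of_lt σ hj]
  omega

lemma isLRMin_zero (σ : Perm (Fin n)) : IsLRMin σ 0 := fun _ h => absurd h (Nat.not_lt_zero _)

lemma isLRMin_iff_eq_of_le {i : ℕ} (h : n ≤ i) : IsLRMin σ i ↔ i = n :=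
  ⟨fun hi => le_antisymm hi.le h, fun hi => hi ▸ isLRMin_self σ⟩

lemma isLRMin_iff (p : Fin n) : IsLRMin σ p ↔ ∀ q < p, σ p < σ q := by
  refine ⟨fun h q hq => ?_, fun h j hj => ?_⟩
  · simpa using h q hq
  · lift j to Fin n using hj.trans p.2
    simpa using h j hj

lemma mem_Xset_iff : σ ∈ Xset n ↔ ∀ i, IsLRMin σ (i + 1) → ¬ IsLRMin σ i := by
  simp only [Xset, Set.mem_ofPred_eq, not_exists, not_and]
  exact forall_congr' fun i => ⟨fun h hi₁ hi => h hi₁.le hi hi₁, fun h _ hi hi₁ => h hi₁ hi⟩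

end LRMin

lemma swap_apply_lt_swap_apply_iff {x y s t : Fin n} (hxy : (x : ℕ) + 1 = y)
    (h : ¬(s = x ∧ t = y)) (h' : ¬(s = y ∧ t = x)) : swap x y s < swap x y t ↔ s < t := by
  simp only [swap_apply_def, Fin.ext_iff, Fin.lt_def] at *
  split_ifs <;> omega

section Swap

variable {σ : Perm (Fin n)} {a b : Fin n}

lemma swap_mul_apply_lt_iff (hab : a < b) (hσ : (σ a : ℕ) + 1 = σ b) {p q : Fin n}
    (hqp : q < p) (hne : ¬(q = a ∧ p = b)) :
    (swap (σ a) (σ b) * σ) p < (swap (σ a) (σ b) * σ) q ↔ σ p < σ q := by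
  refine swap_apply_lt_swap_apply_iff hσ ?_ ?_ <;> simp only [σ.injective.eq_iff]
  · rintro ⟨rfl, rfl⟩
    exact lt_asymm hab hqp
  · exact fun h => hne h.symm

lemma isLRMin_swap_mul_iff (hab : a < b) (hσ : (σ a : ℕ) + 1 = σ b) {i : ℕ} (hi : i ≠ b) :
    IsLRMin (swap (σ a) (σ b) * σ) i ↔ IsLRMin σ i := by
  rcases lt_or_ge i n with hin | hin
  · lift i to Fin n using hin
    rw [isLRMin_iff, isLRMin_iff]
    refine forall₂_congr fun q hq => swap_mul_apply_lt_iff hab hσ hq ?_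
    rintro ⟨-, rfl⟩
    exact hi rfl
  · rw [isLRMin_iff_eq_of_le hin, isLRMin_iff_eq_of_le hin]

lemma isLRMin_swap_mul_apply_iff (hσ : (σ a : ℕ) + 1 = σ b) :
    IsLRMin (swap (σ a) (σ b) * σ) b ↔ ∀ q < b, q ≠ a → σ a < σ q := by
  rw [isLRMin_iff]
  refine forall₂_congr fun q hq => ?_
  have hqb : σ q ≠ σ b := σ.injective.ne hq.ne
  by_cases hqa : q = a
  · subst hqa
    simp only [Perm.coe_mul, Function.comp_apply, swap_apply_right, swap_apply_left, ne_eq,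
      not_true_eq_false, lt_self_iff_false, imp_self, iff_true, gt_iff_lt]
    omega
  · simp [swap_apply_of_ne_of_ne (σ.injective.ne hqa) hqb, hqa]

lemma isLRMin_swap_mul (hab : a < b) (hσ : (σ a : ℕ) + 1 = σ b) {i : ℕ} (h : IsLRMin σ i) :
    IsLRMin (swap (σ a) (σ b) * σ) i := by
  refine (isLRMin_swap_mul_iff hab hσ ?_).2 h
  rintro rfl
  have := (isLRMin_iff b).1 h a hab
  rw [Fin.lt_def] at this
  omega

lemma invCount_eq_ncard (σ : Perm (Fin n)) :
    invCount σ = {p : Fin n × Fin n | p.1 < p.2 ∧ σ p.2 < σ p.1}.ncard :=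
  (Nat.card_coe_set_eq _).symm

lemma invCount_swap_mul (hab : a < b) (hσ : (σ a : ℕ) + 1 = σ b) :
    invCount (swap (σ a) (σ b) * σ) = invCount σ + 1 := by
  have hinv : {p : Fin n × Fin n | p.1 < p.2 ∧
      (swap (σ a) (σ b) * σ) p.2 < (swap (σ a) (σ b) * σ) p.1} =
      insert (a, b) {p : Fin n × Fin n | p.1 < p.2 ∧ σ p.2 < σ p.1} := by
    ext ⟨p, q⟩
    simp only [Set.mem_ofPred_eq, Set.mem_insert_iff, Prod.mk.injEq]
    by_cases hpq : p = a ∧ q = b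
    · obtain ⟨rfl, rfl⟩ := hpq
      simp only [hab, Perm.coe_mul, Function.comp_apply, swap_apply_right, swap_apply_left,
        true_and, and_self, true_or, iff_true]
      omega
    · simp only [hpq, false_or]
      exact and_congr_right fun h => swap_mul_apply_lt_iff hab hσ h hpq
  rw [invCount_eq_ncard, invCount_eq_ncard, hinv, Set.ncard_insert_of_notMem]
  simp only [Set.mem_ofPred_eq, not_and, not_lt]
  omega

end Swap

section WeakOrder

variable {σ τ : Perm (Fin n)}

lemma weakCover_iff :
    WeakCover σ τ ↔ ∃ a b, a < b ∧ (σ a : ℕ) + 1 = σ b ∧ τ = swap (σ a) (σ b) * σ := by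
  constructor
  · rintro ⟨v, hv, rfl, hinv⟩
    set x : Fin n := ⟨v, Nat.lt_of_succ_lt hv⟩
    set y : Fin n := ⟨v + 1, hv⟩
    have hx : σ (σ.symm x) = x := σ.apply_symm_apply x
    have hy : σ (σ.symm y) = y := σ.apply_symm_apply y
    rcases lt_trichotomy (σ.symm x) (σ.symm y) with hlt | heq | hgt
    · exact ⟨_, _, hlt, by rw [hx, hy], by rw [hx, hy]⟩
    · exact absurd (σ.symm.injective heq) (by simp [x, y, Fin.ext_iff])
    · -- the swap would undo an ascent of `swap x y * σ`, so it would lower the inversion count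
      set τ := swap x y * σ
      have hτx : τ (σ.symm y) = x := by simp [τ]
      have hτy : τ (σ.symm x) = y := by simp [τ]
      have hτ : swap (τ (σ.symm y)) (τ (σ.symm x)) * τ = σ := by
        rw [hτx, hτy, ← mul_assoc, swap_mul_self, one_mul]
      have := invCount_swap_mul (σ := τ) hgt (by rw [hτx, hτy])
      rw [hτ] at this
      omega
  · rintro ⟨a, b, hab, hσ, rfl⟩
    refine ⟨σ a, hσ ▸ (σ b).2, ?_, invCount_swap_mul hab hσ⟩
    congr 2
    exact Fin.ext hσ.symm

lemma mem_Xset_of_weakCover (h : WeakCover σ τ) (hτ : τ ∈ Xset n) : σ ∈ Xset n := by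
  obtain ⟨a, b, hab, hσ, rfl⟩ := weakCover_iff.1 h
  rw [mem_Xset_iff] at hτ ⊢
  exact fun i hi₁ hi => hτ i (isLRMin_swap_mul hab hσ hi₁) (isLRMin_swap_mul hab hσ hi)

lemma mem_Xset_of_weakLe (h : WeakLe σ τ) (hτ : τ ∈ Xset n) : σ ∈ Xset n := by
  induction h with
  | refl => exact hτ
  | tail _ hcov ih => exact ih (mem_Xset_of_weakCover hcov hτ)

lemma isMaxX_iff : IsMaxX n σ ↔ σ ∈ Xset n ∧
    ∀ a b, a < b → (σ a : ℕ) + 1 = σ b → swap (σ a) (σ b) * σ ∉ Xset n := by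
  refine and_congr_right fun _ => ⟨fun hmax a b hab hσ hτ => ?_, fun h τ hτ hle => ?_⟩
  · have hcov : WeakCover σ (swap (σ a) (σ b) * σ) := weakCover_iff.2 ⟨a, b, hab, hσ, rfl⟩
    have := invCount_swap_mul hab hσ
    rw [hmax _ hτ (.single hcov)] at this
    omega
  · rcases Relation.ReflTransGen.cases_head hle with rfl | ⟨ρ, hcov, hle'⟩
    · rfl
    · obtain ⟨a, b, hab, hσ, rfl⟩ := weakCover_iff.1 hcov
      exact absurd (mem_Xset_of_weakLe hle' hτ) (h a b hab hσ)

/-- The swap of the ascent leaves `X_n`, so it creates two adjacent left-to-right minima, and only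
`b` can be a new one. -/
lemma IsMaxX.apply_lt_apply (hmax : IsMaxX n σ) {a b : Fin n} (hab : a < b)
    (hσ : (σ a : ℕ) + 1 = σ b) : ∀ q < b, q ≠ a → σ a < σ q := by
  obtain ⟨hX, hdead⟩ := isMaxX_iff.1 hmax
  have hτ := hdead a b hab hσ
  simp only [Xset, Set.mem_ofPred_eq, not_not] at hτ
  obtain ⟨i, -, hi, hi₁⟩ := hτ
  rw [← isLRMin_swap_mul_apply_iff hσ]
  by_contra hb
  have hib : i ≠ b := fun h => hb (h ▸ hi)
  have hi₁b : i + 1 ≠ b := fun h => hb (h ▸ hi₁)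
  exact mem_Xset_iff.1 hX i ((isLRMin_swap_mul_iff hab hσ hi₁b).1 hi₁)
    ((isLRMin_swap_mul_iff hab hσ hib).1 hi)

end WeakOrder

namespace Composition

variable (c : Composition n)

lemma lt_sizeUpTo_index_add_one (p : Fin n) : (p : ℕ) < c.sizeUpTo (c.index p + 1) := by
  simpa using c.lt_sizeUpTo_index_succ p

variable {c}

lemma sizeUpTo_index_add_one_le {p : Fin n} {k : ℕ} (h : (p : ℕ) < c.sizeUpTo k) :
    c.sizeUpTo (c.index p + 1) ≤ c.sizeUpTo k := by
  refine c.monotone_sizeUpTo (Nat.succ_le_of_lt (lt_of_not_ge fun hk => ?_))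
  have := c.monotone_sizeUpTo hk
  have := c.sizeUpTo_index_le p
  omega

lemma le_sizeUpTo_index {p : Fin n} {k : ℕ} (h : c.sizeUpTo k ≤ p) :
    c.sizeUpTo k ≤ c.sizeUpTo (c.index p) := by
  refine c.monotone_sizeUpTo (Nat.le_of_lt_succ (lt_of_not_ge fun hk => ?_))
  have := c.monotone_sizeUpTo (show (c.index p : ℕ) + 1 ≤ k from hk)
  have := c.lt_sizeUpTo_index_add_one p
  omega

lemma coe_mem_range_sizeUpTo_iff (p : Fin n) :
    (p : ℕ) ∈ Set.range c.sizeUpTo ↔ c.sizeUpTo (c.index p) = p := by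
  refine ⟨?_, fun h => ⟨_, h⟩⟩
  rintro ⟨k, hk⟩
  exact le_antisymm (c.sizeUpTo_index_le p) (hk ▸ le_sizeUpTo_index hk.le)

lemma mem_range_sizeUpTo_iff_eq_of_le {i : ℕ} (h : n ≤ i) : i ∈ Set.range c.sizeUpTo ↔ i = n := by
  refine ⟨?_, fun hi => ⟨c.length, hi ▸ c.sizeUpTo_length⟩⟩
  rintro ⟨k, rfl⟩
  exact le_antisymm (c.sizeUpTo_le k) h

lemma le_of_mem_range_sizeUpTo {i : ℕ} (h : i ∈ Set.range c.sizeUpTo) : i ≤ n := by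
  obtain ⟨k, rfl⟩ := h
  exact c.sizeUpTo_le k

lemma mem_boundaries_iff (j : Fin (n + 1)) : j ∈ c.boundaries ↔ (j : ℕ) ∈ Set.range c.sizeUpTo := by
  simp only [boundaries, Finset.mem_map, Finset.mem_univ, true_and, Set.mem_range]
  constructor
  · rintro ⟨k, rfl⟩
    exact ⟨k, rfl⟩
  · rintro ⟨k, hk⟩
    refine ⟨⟨min k c.length, by omega⟩, Fin.ext ?_⟩
    rcases le_total k c.length with hkl | hkl
    · simpa [boundary, hkl] using hk
    · simpa [boundary, hkl, ← hk] using (c.sizeUpTo_ofLength_le k hkl).symm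

lemma ext_of_range_sizeUpTo {c' : Composition n}
    (h : Set.range c.sizeUpTo = Set.range c'.sizeUpTo) : c = c' :=
  (compositionEquiv n).injective <| CompositionAsSet.ext <| Finset.ext fun j => by
    simp [compositionEquiv, mem_boundaries_iff, h]

lemma exists_range_sizeUpTo_eq {S : Set ℕ} (h0 : 0 ∈ S) (hn : n ∈ S) (hS : ∀ i ∈ S, i ≤ n) :
    ∃ c : Composition n, Set.range c.sizeUpTo = S := by
  classical
  let s : CompositionAsSet n :=
    ⟨Finset.univ.filter fun j => (j : ℕ) ∈ S, by simpa using h0, by simpa using hn⟩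
  refine ⟨s.toComposition, Set.ext fun i => ?_⟩
  by_cases hi : i ≤ n
  · have := s.toComposition.mem_boundaries_iff ⟨i, Nat.lt_succ_of_le hi⟩
    simp only [CompositionAsSet.toComposition_boundaries, s, Finset.mem_filter,
      Finset.mem_univ, true_and] at this
    exact this.symm
  · exact iff_of_false (fun h => hi (le_of_mem_range_sizeUpTo h)) fun h => hi (hS i h)

variable (c)

lemma two_le_of_mem_blocks_iff :
    (∀ i ∈ c.blocks, 2 ≤ i) ↔ ∀ i, i + 1 ∈ Set.range c.sizeUpTo → i ∉ Set.range c.sizeUpTo := by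
  constructor
  · rintro h i ⟨l, hl⟩ ⟨k, rfl⟩
    have hk : k < c.length := by
      by_contra! hk
      have := c.sizeUpTo_le l
      rw [c.sizeUpTo_ofLength_le k hk] at hl
      omega
    have hkl : k < l := c.monotone_sizeUpTo.reflect_lt (by omega)
    have := c.monotone_sizeUpTo (show k + 1 ≤ l by omega)
    have := h _ (List.getElem_mem hk)
    have := c.sizeUpTo_succ hk
    omega
  · intro h i hi
    obtain ⟨k, hk, rfl⟩ := List.mem_iff_getElem.1 hi
    have h1 := c.one_le_blocks' hk
    have h2 := c.sizeUpTo_succ hk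
    by_contra! h3
    exact h (c.sizeUpTo k) ⟨k + 1, by omega⟩ ⟨k, rfl⟩

end Composition

lemma Equiv.apply_mem_iff_of_eqOn_compl {α β : Type*} {σ π : α ≃ β} {s : Set α} {t : Set β}
    (hπ : ∀ a, π a ∈ t ↔ a ∈ s) (h : Set.EqOn σ π sᶜ) (a : α) : σ a ∈ t ↔ a ∈ s := by
  by_cases ha : a ∈ s
  · simp only [ha, iff_true]
    obtain ⟨a', ha'⟩ := π.surjective (σ a)
    rw [← ha', hπ]
    by_contra ha's
    rw [← h ha's, σ.injective.eq_iff] at ha'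
    exact ha's (ha' ▸ ha)
  · rw [h ha, hπ]

section WIval

variable {c : Composition n}

lemma wIval_of_mem_range {p : Fin n} (hp : (p : ℕ) ∈ Set.range c.sizeUpTo) :
    wIval c p = n - c.sizeUpTo (c.index p + 1) := by
  rw [c.coe_mem_range_sizeUpTo_iff] at hp
  simp [wIval, hp]

lemma wIval_of_not_mem_range {p : Fin n} (hp : (p : ℕ) ∉ Set.range c.sizeUpTo) :
    wIval c p = n - p := by
  rw [c.coe_mem_range_sizeUpTo_iff] at hp
  have h1 := c.sizeUpTo_index_le p
  have h2 := c.lt_sizeUpTo_index_add_one p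
  have h3 := c.sizeUpTo_le (c.index p + 1)
  have h4 := c.sizeUpTo_succ' (c.index p)
  simp only [wIval, if_neg (show (p : ℕ) - c.sizeUpTo (c.index p) ≠ 0 by omega)]
  omega

lemma sub_sizeUpTo_index_add_one_le_wIval (c : Composition n) (p : Fin n) :
    n - c.sizeUpTo (c.index p + 1) ≤ wIval c p :=
  Nat.le_add_right _ _

/-- The values of `w_I` at the positions `q ≤ p`. -/
def prefixValues (c : Composition n) (p : Fin n) : Set ℕ :=
  {y | n - p ≤ y ∨ y = n - c.sizeUpTo (c.index p + 1)}

lemma wIval_mem_prefixValues_iff (p q : Fin n) : wIval c q ∈ prefixValues c p ↔ q ≤ p := by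
  have hp := c.lt_sizeUpTo_index_add_one p
  have hq := c.lt_sizeUpTo_index_add_one q
  have hpn := c.sizeUpTo_le (c.index p + 1)
  have hqn := c.sizeUpTo_le (c.index q + 1)
  have hpq : (p : ℕ) < c.sizeUpTo (c.index q + 1) →
      c.sizeUpTo (c.index p + 1) ≤ c.sizeUpTo (c.index q + 1) :=
    c.sizeUpTo_index_add_one_le
  have hqp : (q : ℕ) < c.sizeUpTo (c.index p + 1) →
      c.sizeUpTo (c.index q + 1) ≤ c.sizeUpTo (c.index p + 1) :=
    c.sizeUpTo_index_add_one_le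
  simp only [prefixValues, Set.mem_ofPred_eq]
  by_cases hstart : (q : ℕ) ∈ Set.range c.sizeUpTo
  · rw [wIval_of_mem_range hstart]
    obtain ⟨k, hk⟩ := hstart
    have hpk : (p : ℕ) < c.sizeUpTo k → c.sizeUpTo (c.index p + 1) ≤ c.sizeUpTo k :=
      c.sizeUpTo_index_add_one_le
    omega
  · rw [wIval_of_not_mem_range hstart]
    have : (q : ℕ) ≠ c.sizeUpTo (c.index p + 1) := fun h => hstart ⟨_, h.symm⟩
    omega

lemma wIval_lt (c : Composition n) (p : Fin n) : wIval c p < n := by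
  have hp := c.lt_sizeUpTo_index_add_one p
  by_cases hstart : (p : ℕ) ∈ Set.range c.sizeUpTo
  · rw [wIval_of_mem_range hstart]
    omega
  · have : (p : ℕ) ≠ 0 := fun h => hstart ⟨0, h ▸ c.sizeUpTo_zero⟩
    rw [wIval_of_not_mem_range hstart]
    omega

lemma wIval_injective (c : Composition n) : Function.Injective (wIval c) := fun p q h =>
  le_antisymm ((wIval_mem_prefixValues_iff q p).1 (h ▸ (wIval_mem_prefixValues_iff q q).2 le_rfl))
    ((wIval_mem_prefixValues_iff p q).1 (h ▸ (wIval_mem_prefixValues_iff p p).2 le_rfl))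

noncomputable def wPerm (c : Composition n) : Perm (Fin n) :=
  Equiv.ofBijective (fun p => ⟨wIval c p, wIval_lt c p⟩) <|
    Finite.injective_iff_bijective.1 fun _ _ h => wIval_injective c (Fin.val_eq_of_eq h)

lemma wPerm_apply (c : Composition n) (p : Fin n) : (wPerm c p : ℕ) = wIval c p :=
  rfl

lemma isLRMin_iff_mem_range_sizeUpTo {σ : Perm (Fin n)} (hσ : ∀ p, (σ p : ℕ) = wIval c p)
    (i : ℕ) : IsLRMin σ i ↔ i ∈ Set.range c.sizeUpTo := by
  rcases lt_or_ge i n with hi | hi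
  · lift i to Fin n using hi
    have hi := c.lt_sizeUpTo_index_add_one i
    have hin := c.sizeUpTo_le (c.index i + 1)
    simp only [isLRMin_iff, Fin.lt_def, hσ]
    by_cases hstart : (i : ℕ) ∈ Set.range c.sizeUpTo
    · simp only [hstart, iff_true, wIval_of_mem_range hstart]
      intro q hq
      obtain ⟨k, hk⟩ := hstart
      have := c.sizeUpTo_index_add_one_le (p := q) (k := k) (by omega)
      have := sub_sizeUpTo_index_add_one_le_wIval c q
      omega
    · simp only [hstart, iff_false, not_forall, wIval_of_not_mem_range hstart]
      have hs := c.sizeUpTo_index_le i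
      have hs' : c.sizeUpTo (c.index i) ≠ i := fun h => hstart ⟨_, h⟩
      -- the block of `i` starts strictly before `i`, with a smaller value
      let q : Fin n := ⟨c.sizeUpTo (c.index i), by omega⟩
      have hqv : (q : ℕ) = c.sizeUpTo (c.index i) := rfl
      have hq : (q : ℕ) ∈ Set.range c.sizeUpTo := ⟨_, hqv.symm⟩
      have hqi : c.sizeUpTo (c.index q + 1) ≤ c.sizeUpTo (c.index i + 1) :=
        c.sizeUpTo_index_add_one_le (by omega)
      have hiq : (i : ℕ) < c.sizeUpTo (c.index q + 1) := by
        by_contra! h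
        have := Composition.le_sizeUpTo_index h
        have := c.lt_sizeUpTo_index_add_one q
        omega
      refine ⟨q, by omega, ?_⟩
      rw [wIval_of_mem_range hq]
      omega
  · rw [isLRMin_iff_eq_of_le hi, c.mem_range_sizeUpTo_iff_eq_of_le hi]

lemma mem_Xset_iff_two_le {σ : Perm (Fin n)}
    (hc : ∀ i, IsLRMin σ i ↔ i ∈ Set.range c.sizeUpTo) : σ ∈ Xset n ↔ ∀ i ∈ c.blocks, 2 ≤ i := by
  simp only [mem_Xset_iff, hc, c.two_le_of_mem_blocks_iff]

lemma sizeUpTo_index_add_one_eq_of_wIval_add_one {a b : Fin n} (hab : a < b)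
    (h : wIval c a + 1 = wIval c b) :
    c.sizeUpTo (c.index a + 1) = b + 1 ∧ wIval c a = n - (b + 1) := by
  have ha := (wIval_mem_prefixValues_iff (c := c) a a).2 le_rfl
  have hb := (wIval_mem_prefixValues_iff (c := c) a b).not.2 (not_le.2 hab)
  simp only [prefixValues, Set.mem_ofPred_eq] at ha hb
  have hae := c.lt_sizeUpTo_index_add_one a
  have han := c.sizeUpTo_le (c.index a + 1)
  by_cases hstart : (b : ℕ) ∈ Set.range c.sizeUpTo
  · exfalso
    obtain ⟨k, hk⟩ := hstart
    have := c.sizeUpTo_index_add_one_le (p := a) (k := k) (by omega)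
    have := c.lt_sizeUpTo_index_add_one b
    have := c.sizeUpTo_le (c.index b + 1)
    rw [wIval_of_mem_range ⟨k, hk⟩] at h
    omega
  · rw [wIval_of_not_mem_range hstart] at h
    omega

lemma isMaxX_of_wIval {σ : Perm (Fin n)} (hσ : ∀ p, (σ p : ℕ) = wIval c p)
    (h2 : ∀ i ∈ c.blocks, 2 ≤ i) : IsMaxX n σ := by
  have hc := isLRMin_iff_mem_range_sizeUpTo hσ
  refine isMaxX_iff.2 ⟨(mem_Xset_iff_two_le hc).2 h2, fun a b hab hab' hτ => ?_⟩
  obtain ⟨he, hva⟩ := sizeUpTo_index_add_one_eq_of_wIval_add_one hab (by rw [← hσ, ← hσ, hab'])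
  -- the swap makes `b` a left-to-right minimum next to the block boundary `b + 1`
  refine mem_Xset_iff.1 hτ b (isLRMin_swap_mul hab hab' ((hc _).2 ⟨_, he⟩))
    ((isLRMin_swap_mul_apply_iff hab').2 fun q hq hqa => ?_)
  have := c.sizeUpTo_index_add_one_le (p := q) (k := c.index a + 1) (by omega)
  have := sub_sizeUpTo_index_add_one_le_wIval c q
  have : wIval c q ≠ wIval c a := (wIval_injective c).ne hqa
  rw [Fin.lt_def, hσ, hσ]
  omega

end WIval

section Maximal

variable {c : Composition n} {σ : Perm (Fin n)}

lemma IsMaxX.apply_eq_wIval_of_prefixValues (hmax : IsMaxX n σ) {p : Fin n}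
    (hp : IsLRMin σ p ↔ (p : ℕ) ∈ Set.range c.sizeUpTo)
    (hV : ∀ q, (σ q : ℕ) ∈ prefixValues c p ↔ q ≤ p) : (σ p : ℕ) = wIval c p := by
  simp only [prefixValues, Set.mem_ofPred_eq] at hV
  have hpe := c.lt_sizeUpTo_index_add_one p
  have hen := c.sizeUpTo_le (c.index p + 1)
  obtain ⟨j, hj⟩ : ∃ j, (σ j : ℕ) = n - c.sizeUpTo (c.index p + 1) :=
    ⟨σ.symm ⟨n - c.sizeUpTo (c.index p + 1), by omega⟩, by simp⟩
  have hjp : j ≤ p := (hV j).1 (Or.inr hj)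
  have hσp := (hV p).2 le_rfl
  by_cases hstart : (p : ℕ) ∈ Set.range c.sizeUpTo
  · rw [wIval_of_mem_range hstart]
    by_contra hne
    have hjp' : j < p := lt_of_le_of_ne hjp (by rintro rfl; exact hne hj)
    have := (isLRMin_iff p).1 (hp.2 hstart) j hjp'
    rw [Fin.lt_def] at this
    omega
  · rw [wIval_of_not_mem_range hstart]
    have hne : (σ p : ℕ) ≠ n - c.sizeUpTo (c.index p + 1) := by
      refine fun hσpe => hstart (hp.1 ((isLRMin_iff p).2 fun q hq => ?_))
      have := (hV q).2 hq.le
      have : (σ q : ℕ) ≠ σ p := Fin.val_injective.ne (σ.injective.ne hq.ne)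
      rw [Fin.lt_def]
      omega
    by_contra hgt
    -- `σ p - 1` sits at some `r < p`, and the smaller value at `j < p` keeps this ascent unblocked
    obtain ⟨r, hr⟩ : ∃ r, (σ r : ℕ) + 1 = σ p :=
      ⟨σ.symm ⟨σ p - 1, by omega⟩, by simp only [apply_symm_apply]; omega⟩
    have hrp : r < p := lt_of_le_of_ne ((hV r).1 (Or.inl (by omega))) (by rintro rfl; omega)
    have hjr : j ≠ r := by rintro rfl; omega
    have := hmax.apply_lt_apply hrp hr j (lt_of_le_of_ne hjp (by rintro rfl; omega)) hjr
    rw [Fin.lt_def] at this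
    omega

lemma IsMaxX.apply_eq_wIval (hmax : IsMaxX n σ) (hc : ∀ i, IsLRMin σ i ↔ i ∈ Set.range c.sizeUpTo)
    (p : Fin n) : (σ p : ℕ) = wIval c p := by
  induction p using WellFoundedGT.induction with
  | _ p ih =>
    refine hmax.apply_eq_wIval_of_prefixValues (hc p) fun q =>
      Equiv.apply_mem_iff_of_eqOn_compl (π := wPerm c) (s := Set.Iic p)
        (t := {y | (y : ℕ) ∈ prefixValues c p}) (fun q => wIval_mem_prefixValues_iff p q)
        (fun q hq => Fin.ext ((ih q (not_le.1 hq)).trans (wPerm_apply c q).symm)) q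

end Maximal

lemma isMaxX_iff_exists_wIval {σ : Perm (Fin n)} :
    IsMaxX n σ ↔ ∃ c : Composition n, (∀ i ∈ c.blocks, 2 ≤ i) ∧ ∀ p, (σ p : ℕ) = wIval c p := by
  refine ⟨fun hmax => ?_, fun ⟨c, h2, hσ⟩ => isMaxX_of_wIval hσ h2⟩
  obtain ⟨c, hc⟩ := Composition.exists_range_sizeUpTo_eq (S := {i | IsLRMin σ i})
    (isLRMin_zero σ) (isLRMin_self σ) fun _ => IsLRMin.le
  have hc' : ∀ i, IsLRMin σ i ↔ i ∈ Set.range c.sizeUpTo := fun i => by rw [hc]; rfl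
  exact ⟨c, (mem_Xset_iff_two_le hc').1 hmax.1, hmax.apply_eq_wIval hc'⟩

lemma wPerm_injective : Function.Injective (wPerm (n := n)) := fun c c' h =>
  Composition.ext_of_range_sizeUpTo <| Set.ext fun i => by
    rw [← isLRMin_iff_mem_range_sizeUpTo (wPerm_apply c) i,
      ← isLRMin_iff_mem_range_sizeUpTo (σ := wPerm c) (fun p => by rw [h, wPerm_apply]) i]

lemma card_isMaxX :
    Nat.card {σ : Perm (Fin n) // IsMaxX n σ} =
      Nat.card {c : Composition n // ∀ i ∈ c.blocks, 2 ≤ i} := by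
  refine (Nat.card_eq_of_bijective (fun c => ⟨wPerm c.1, isMaxX_of_wIval (wPerm_apply c.1) c.2⟩)
    ⟨fun c c' h => Subtype.ext (wPerm_injective (congrArg Subtype.val h)), fun σ => ?_⟩).symm
  obtain ⟨c, h2, hc⟩ := isMaxX_iff_exists_wIval.1 σ.2
  exact ⟨⟨c, h2⟩, Subtype.ext (Equiv.ext fun p => Fin.ext (hc p).symm)⟩

/-- The maximal elements of the left weak order ideal `X_n` are exactly the shifted
concatenations `w_I` over compositions `I` of `n` with no part equal to `1`; in particular
their number is the number of compositions of `n` into parts `≥ 2`. -/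
theorem stmt_11 (n : ℕ) :
    (∀ σ : Perm (Fin n), IsMaxX n σ ↔
      ∃ c : Composition n, (∀ i ∈ c.blocks, 2 ≤ i) ∧ ∀ p : Fin n, (σ p : ℕ) = wIval c p) ∧
    Nat.card {σ : Perm (Fin n) // IsMaxX n σ} =
      Nat.card {c : Composition n // ∀ i ∈ c.blocks, 2 ≤ i} :=
  ⟨fun _ => isMaxX_iff_exists_wIval, card_isMaxX⟩
end
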